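/- arXiv:2406.03650 — 11 statements merged into one kernel-verified Lean document; each statement's English description precedes it below -/
import Mathlib

section
/- Let A be a commutative complex Banach algebra with identity 1 and let a ∈ A. If the multiplication operator M_a is recurrent, then a is invertible in A (hence M_a is invertible with inverse M_{a^{−1}}), and M_{a^{−1}} is also recurrent. -/
/-!
If `a` is not invertible it lies in a maximal ideal, which is closed in a Banach algebra and
contains every `a ^ n * x` with `n ≥ 1`; hence it contains all recurrent vectors of `M_a`,
which cannot then be dense.

For the inverse, recurrence of a continuous map `T` on a complete metric space has a
Baire-category characterisation: the recurrent points are dense iff every nonempty open `U`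
meets `T^[n] ⁻¹' U` for infinitely many `n`. This condition is symmetric in `T` and a left
inverse `S` of `T`, since `x ∈ U ∩ T^[n] ⁻¹' U` gives `T^[n] x ∈ U ∩ S^[n] ⁻¹' U`.
-/

open Filter Topology Function Metric Set

def recurrentPts {X : Type*} [TopologicalSpace X] (T : X → X) : Set X :=
  {x | ∃ n : ℕ → ℕ, StrictMono n ∧ (∀ k, 0 < n k) ∧ Tendsto (fun k => T^[n k] x) atTop (𝓝 x)}

section Recurrence

variable {X : Type*} {T S : X → X}

theorem mem_recurrentPts_iff_mapClusterPt [TopologicalSpace X] [FirstCountableTopology X]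
    {x : X} : x ∈ recurrentPts T ↔ MapClusterPt x atTop (fun n => T^[n] x) := by
  constructor
  · rintro ⟨n, hn, -, hx⟩
    exact hx.mapClusterPt.of_comp hn.tendsto_atTop
  · intro hx
    obtain ⟨ψ, hψ, hψx⟩ := hx.tendsto_subseq
    exact ⟨fun k => ψ (k + 1), hψ.comp (strictMono_id.add_const 1),
      fun k => (Nat.zero_le _).trans_lt (hψ k.lt_succ_self),
      hψx.comp (tendsto_add_atTop_nat 1)⟩

theorem Dense.frequently_inter_preimage_iterate_nonempty [TopologicalSpace X]
    (h : Dense (recurrentPts T)) {U : Set X} (hU : IsOpen U) (hne : U.Nonempty) :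
    ∃ᶠ n in atTop, (U ∩ T^[n] ⁻¹' U).Nonempty := by
  obtain ⟨x, hxU, n, hn, -, hx⟩ := h.inter_open_nonempty U hU hne
  exact hn.tendsto_atTop.frequently
    ((hx.eventually (hU.mem_nhds hxU)).frequently.mono fun k hk => ⟨x, hxU, hk⟩)

theorem dense_recurrentPts_of_frequently [PseudoMetricSpace X] [BaireSpace X]
    (hT : Continuous T)
    (h : ∀ U : Set X, IsOpen U → U.Nonempty → ∃ᶠ n in atTop, (U ∩ T^[n] ⁻¹' U).Nonempty) :
    Dense (recurrentPts T) := by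
  set G : ℕ × ℕ → Set X := fun p => ⋃ n ≥ p.2, {x | dist (T^[n] x) x < 1 / (p.1 + 1)}
  have hG_open : ∀ p, IsOpen (G p) := fun p =>
    isOpen_biUnion fun n _ => isOpen_lt ((hT.iterate n).dist continuous_id) continuous_const
  have hG_dense : ∀ p, Dense (G p) := by
    intro p
    refine dense_iff_inter_open.2 fun V hV ⟨z, hz⟩ => ?_
    obtain ⟨r, hr, hrV⟩ := Metric.isOpen_iff.1 hV z hz
    set ε := min r (1 / (p.1 + 1) : ℝ)
    have hε : 0 < ε := lt_min hr (by positivity)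
    obtain ⟨n, hn, x, hx, hTx⟩ :=
      (h (ball z (ε / 2)) isOpen_ball (nonempty_ball.2 (half_pos hε))).forall_exists_of_atTop p.2
    refine ⟨x, hrV (ball_subset_ball ((half_le_self hε.le).trans (min_le_left _ _)) hx),
      mem_biUnion hn ?_⟩
    calc dist (T^[n] x) x ≤ dist (T^[n] x) z + dist x z := dist_triangle_right _ _ _
      _ < ε / 2 + ε / 2 := add_lt_add hTx hx
      _ ≤ 1 / (p.1 + 1) := by linarith [min_le_right r (1 / (p.1 + 1) : ℝ)]
  refine (dense_iInter_of_isOpen hG_open hG_dense).mono fun x hx => ?_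
  rw [mem_recurrentPts_iff_mapClusterPt,
    nhds_basis_ball_inv_nat_succ.mapClusterPt_iff_frequently]
  refine fun j _ => frequently_atTop.2 fun N => ?_
  obtain ⟨n, hn, hxn⟩ := mem_iUnion₂.1 (mem_iInter.1 hx (j, N))
  exact ⟨n, hn, hxn⟩

theorem Dense.recurrentPts_of_leftInverse [PseudoMetricSpace X] [BaireSpace X]
    (h : Dense (recurrentPts T)) (hS : Continuous S) (hST : LeftInverse S T) :
    Dense (recurrentPts S) :=
  dense_recurrentPts_of_frequently hS fun U hU hne =>
    (h.frequently_inter_preimage_iterate_nonempty hU hne).mono fun n ⟨x, hx, hTx⟩ =>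
      ⟨T^[n] x, hTx, by rwa [mem_preimage, hST.iterate n x]⟩

end Recurrence

theorem recurrentPts_mul_left {M : Type*} [Monoid M] [TopologicalSpace M] (a : M) :
    recurrentPts (a * ·) = {x | ∃ n : ℕ → ℕ, StrictMono n ∧ (∀ k, 0 < n k) ∧
      Tendsto (fun k => a ^ n k * x) atTop (𝓝 x)} := by
  simp only [recurrentPts, mul_left_iterate]

theorem recurrentPts_mul_left_subset_of_mem {R : Type*} [CommSemiring R] [TopologicalSpace R]
    {I : Ideal R} (hI : IsClosed (I : Set R)) {a : R} (ha : a ∈ I) :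
    recurrentPts (a * ·) ⊆ I := by
  rw [recurrentPts_mul_left]
  rintro x ⟨n, -, hn, hx⟩
  exact hI.mem_of_tendsto hx
    (Eventually.of_forall fun k => I.mul_mem_right x (I.pow_mem_of_mem ha _ (hn k)))

theorem isUnit_of_dense_recurrentPts_mul_left {R : Type*} [NormedCommRing R] [CompleteSpace R]
    {a : R} (h : Dense (recurrentPts (a * ·))) : IsUnit a := by
  by_contra ha
  obtain ⟨I, hI, haI⟩ := exists_max_ideal_of_mem_nonunits ha
  have hI_closed : IsClosed (I : Set R) := Ideal.IsMaximal.isClosed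
  have hsub := recurrentPts_mul_left_subset_of_mem hI_closed haI
  exact hI.ne_top (I.eq_top_iff_one.2
    (hI_closed.closure_subset_iff.2 hsub (h.closure_eq.symm ▸ mem_univ 1)))

theorem recurrent_multiplication_operator_invertible_general
    (A : Type*) [NormedCommRing A] [CompleteSpace A]
    (a : A)
    (hrec : Dense {x : A | ∃ n : ℕ → ℕ, StrictMono n ∧ (∀ k, 0 < n k) ∧
      Tendsto (fun k => a ^ n k * x) atTop (𝓝 x)}) :
    ∃ b : A, a * b = 1 ∧ b * a = 1 ∧
      Dense {x : A | ∃ n : ℕ → ℕ, StrictMono n ∧ (∀ k, 0 < n k) ∧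
        Tendsto (fun k => b ^ n k * x) atTop (𝓝 x)} := by
  rw [← recurrentPts_mul_left] at hrec
  obtain ⟨u, rfl⟩ := isUnit_of_dense_recurrentPts_mul_left hrec
  refine ⟨↑u⁻¹, u.mul_inv, u.inv_mul, ?_⟩
  rw [← recurrentPts_mul_left]
  exact hrec.recurrentPts_of_leftInverse (continuous_const_mul _) u.inv_mul_cancel_left

/-- If the multiplication operator `M_a` on a commutative complex Banach
algebra with identity is recurrent (the set of its recurrent vectors is dense), then `a`
is invertible and the multiplication operator by the inverse is also recurrent. -/
theorem recurrent_multiplication_operator_invertible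
    (A : Type*) [NormedCommRing A] [NormedAlgebra ℂ A] [CompleteSpace A]
    (a : A)
    (hrec : Dense {x : A | ∃ n : ℕ → ℕ, StrictMono n ∧ (∀ k, 0 < n k) ∧
      Tendsto (fun k => a ^ n k * x) atTop (𝓝 x)}) :
    ∃ b : A, a * b = 1 ∧ b * a = 1 ∧
      Dense {x : A | ∃ n : ℕ → ℕ, StrictMono n ∧ (∀ k, 0 < n k) ∧
        Tendsto (fun k => b ^ n k * x) atTop (𝓝 x)} :=
  recurrent_multiplication_operator_invertible_general A a hrec
end

section
/- Let A be a commutative complex Banach algebra with identity 1 and let a ∈ A. The following are equivalent: (1) M_a is recurrent on A; (2) M_a is rigid on A, i.e. there exists a strictly increasing sequence (n_k) of positive integers such that a^{n_k} x → x for every x ∈ A; (3) M_a is uniformly rigid on A, i.e. there exists a strictly increasing sequence (n_k) of positive integers such that ‖a^{n_k} − 1‖ → 0 in A. -/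
/-!
The only nontrivial step is from recurrence to uniform rigidity. The units of a Banach algebra
form an open set containing `1`, so a dense set of recurrent vectors contains a unit `x`; from
`a ^ n k * x → x`, multiplying on the right by `x⁻¹` gives `a ^ n k → 1`, which is uniform
rigidity along the same sequence.
-/

open Filter Topology

section TopologicalMonoid

variable {M : Type*} [Monoid M] [TopologicalSpace M] [ContinuousMul M] {α : Type*} {l : Filter α}
  {f : α → M}

theorem tendsto_one_of_tendsto_mul_isUnit {x : M} (hx : IsUnit x)
    (h : Tendsto (fun k => f k * x) l (𝓝 x)) : Tendsto f l (𝓝 1) := by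
  obtain ⟨u, rfl⟩ := hx
  simpa [mul_assoc] using h.mul_const (↑u⁻¹ : M)

theorem forall_tendsto_mul_iff_tendsto_one :
    (∀ x : M, Tendsto (fun k => f k * x) l (𝓝 x)) ↔ Tendsto f l (𝓝 1) :=
  ⟨fun h => tendsto_one_of_tendsto_mul_isUnit isUnit_one (h 1),
    fun h x => by simpa using h.mul_const x⟩

end TopologicalMonoid

theorem recurrent_iff_rigid_iff_uniformly_rigid_general
    (A : Type*) [NormedCommRing A] [CompleteSpace A]
    (a : A) :
    (Dense {x : A | ∃ n : ℕ → ℕ, StrictMono n ∧ (∀ k, 0 < n k) ∧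
        Tendsto (fun k => a ^ n k * x) atTop (𝓝 x)} ↔
      ∃ n : ℕ → ℕ, StrictMono n ∧ (∀ k, 0 < n k) ∧
        ∀ x : A, Tendsto (fun k => a ^ n k * x) atTop (𝓝 x)) ∧
    ((∃ n : ℕ → ℕ, StrictMono n ∧ (∀ k, 0 < n k) ∧
        ∀ x : A, Tendsto (fun k => a ^ n k * x) atTop (𝓝 x)) ↔
      ∃ n : ℕ → ℕ, StrictMono n ∧ (∀ k, 0 < n k) ∧
        Tendsto (fun k => ‖a ^ n k - 1‖) atTop (𝓝 0)) := by
  simp only [forall_tendsto_mul_iff_tendsto_one, ← tendsto_iff_norm_sub_tendsto_zero,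
    iff_self, and_true]
  refine ⟨fun hd => ?_, ?_⟩
  · obtain ⟨x, ⟨n, hmono, hpos, hlim⟩, hx⟩ := hd.exists_mem_open Units.isOpen ⟨1, isUnit_one⟩
    exact ⟨n, hmono, hpos, tendsto_one_of_tendsto_mul_isUnit hx hlim⟩
  · rintro ⟨n, hmono, hpos, hlim⟩ x
    exact subset_closure ⟨n, hmono, hpos, forall_tendsto_mul_iff_tendsto_one.mpr hlim x⟩

/-- For a multiplication operator `M_a` on a commutative complex Banach
algebra with identity, recurrence, rigidity and uniform rigidity are all equivalent. -/
theorem recurrent_iff_rigid_iff_uniformly_rigid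
    (A : Type*) [NormedCommRing A] [NormedAlgebra ℂ A] [CompleteSpace A]
    (a : A) :
    (Dense {x : A | ∃ n : ℕ → ℕ, StrictMono n ∧ (∀ k, 0 < n k) ∧
        Tendsto (fun k => a ^ n k * x) atTop (𝓝 x)} ↔
      ∃ n : ℕ → ℕ, StrictMono n ∧ (∀ k, 0 < n k) ∧
        ∀ x : A, Tendsto (fun k => a ^ n k * x) atTop (𝓝 x)) ∧
    ((∃ n : ℕ → ℕ, StrictMono n ∧ (∀ k, 0 < n k) ∧
        ∀ x : A, Tendsto (fun k => a ^ n k * x) atTop (𝓝 x)) ↔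
      ∃ n : ℕ → ℕ, StrictMono n ∧ (∀ k, 0 < n k) ∧
        Tendsto (fun k => ‖a ^ n k - 1‖) atTop (𝓝 0)) :=
  recurrent_iff_rigid_iff_uniformly_rigid_general A a
end

section
/- Let A be a commutative complex Banach algebra with identity 1 and let a ∈ A. If M_a has a recurrent vector b that is invertible in A, then every vector of A is recurrent for M_a; in particular, M_a is recurrent. -/
open Filter Topology

theorem tendsto_mul_of_tendsto_mul_isUnit {M ι : Type*} [Monoid M] [TopologicalSpace M]
    [ContinuousMul M] {l : Filter ι} {f : ι → M} {b : M} (hb : IsUnit b)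
    (hf : Tendsto (fun k => f k * b) l (𝓝 b)) (x : M) :
    Tendsto (fun k => f k * x) l (𝓝 x) := by
  obtain ⟨u, rfl⟩ := hb
  simpa only [mul_assoc, Units.mul_inv_cancel_left] using hf.mul_const (↑u⁻¹ * x)

theorem recurrent_of_invertible_recurrent_vector_general
    (A : Type*) [NormedCommRing A]
    (a b : A) (hb : IsUnit b)
    (hrec : ∃ n : ℕ → ℕ, StrictMono n ∧ (∀ k, 0 < n k) ∧
      Tendsto (fun k => a ^ n k * b) atTop (𝓝 b)) :
    (∀ x : A, ∃ n : ℕ → ℕ, StrictMono n ∧ (∀ k, 0 < n k) ∧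
      Tendsto (fun k => a ^ n k * x) atTop (𝓝 x)) ∧
    Dense {x : A | ∃ n : ℕ → ℕ, StrictMono n ∧ (∀ k, 0 < n k) ∧
      Tendsto (fun k => a ^ n k * x) atTop (𝓝 x)} := by
  obtain ⟨n, hmono, hpos, hlim⟩ := hrec
  have hall : ∀ x : A, ∃ n : ℕ → ℕ, StrictMono n ∧ (∀ k, 0 < n k) ∧
      Tendsto (fun k => a ^ n k * x) atTop (𝓝 x) :=
    fun x => ⟨n, hmono, hpos, tendsto_mul_of_tendsto_mul_isUnit hb hlim x⟩
  exact ⟨hall, dense_univ.mono fun x _ => hall x⟩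

/-- If the multiplication operator `M_a` on a commutative complex Banach
algebra with identity has an invertible recurrent vector `b`, then every vector of `A`
is recurrent for `M_a`; in particular `M_a` is recurrent. -/
theorem recurrent_of_invertible_recurrent_vector
    (A : Type*) [NormedCommRing A] [NormedAlgebra ℂ A] [CompleteSpace A]
    (a b : A) (hb : IsUnit b)
    (hrec : ∃ n : ℕ → ℕ, StrictMono n ∧ (∀ k, 0 < n k) ∧
      Tendsto (fun k => a ^ n k * b) atTop (𝓝 b)) :
    (∀ x : A, ∃ n : ℕ → ℕ, StrictMono n ∧ (∀ k, 0 < n k) ∧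
      Tendsto (fun k => a ^ n k * x) atTop (𝓝 x)) ∧
    Dense {x : A | ∃ n : ℕ → ℕ, StrictMono n ∧ (∀ k, 0 < n k) ∧
      Tendsto (fun k => a ^ n k * x) atTop (𝓝 x)} :=
  recurrent_of_invertible_recurrent_vector_general A a b hb hrec
end

section
/- Let A be a commutative complex Banach algebra with identity 1, let a ∈ A, and suppose there exist elements b_1, …, b_p ∈ A and a strictly increasing sequence (n_k) of positive integers such that a^{n_k} b_i → b_i for every i = 1, …, p. If there exist δ > 0 and a dense subset D of the maximal ideal space X of A such that Σ_{i=1}^p |φ(b_i)| ≥ δ for every φ ∈ D, then ‖a^{n_k} − 1‖ → 0; in particular M_a is recurrent. -/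
/-!
The elements `x` with `a ^ n k * x → x` form an ideal. If `Σᵢ |φ(bᵢ)| ≥ δ` on a dense set of
characters, it holds on all of them by continuity, so no character vanishes at every `bᵢ`; by
Gelfand–Mazur the `bᵢ` then lie in no maximal ideal and generate `A`. Hence the ideal contains
`1`, i.e. `a ^ n k → 1`, and then `a ^ n k * x → x` for every `x`.
-/

open Filter Topology

namespace Ideal

section TendstoMul

variable {R ι : Type*} [CommSemiring R] [TopologicalSpace R] [ContinuousAdd R] [ContinuousMul R]

def tendstoMulSelf (u : ι → R) (l : Filter ι) : Ideal R where
  carrier := {x | Tendsto (fun k => u k * x) l (𝓝 x)}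
  zero_mem' := by simpa using tendsto_const_nhds
  add_mem' {x y} hx hy := by
    simpa only [Set.mem_ofPred_eq, mul_add] using Tendsto.add hx hy
  smul_mem' c x hx := by
    simpa only [Set.mem_ofPred_eq, smul_eq_mul, mul_left_comm] using Tendsto.const_mul c hx

theorem tendsto_one_of_span_eq_top {u : ι → R} {l : Filter ι} {S : Set R} (hS : span S = ⊤)
    (h : ∀ s ∈ S, Tendsto (fun k => u k * s) l (𝓝 s)) : Tendsto u l (𝓝 1) := by
  have hone : Tendsto (fun k => u k * 1) l (𝓝 1) :=
    (span_le (I := tendstoMulSelf u l)).2 h (hS ▸ Submodule.mem_top)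
  simpa using hone

end TendstoMul

theorem span_eq_top_of_forall_character_exists_ne_zero {A : Type*} [NormedCommRing A]
    [NormedAlgebra ℂ A] [CompleteSpace A] {S : Set A}
    (h : ∀ φ : WeakDual.characterSpace ℂ A, ∃ s ∈ S, φ s ≠ 0) : span S = ⊤ := by
  by_contra hne
  obtain ⟨M, hM, hSM⟩ := exists_le_maximal _ hne
  obtain ⟨s, hs, hφs⟩ := h M.toCharacterSpace
  exact hφs (M.toCharacterSpace_apply_eq_zero_of_mem (hSM (subset_span hs)))

end Ideal

/-- Suppose `b₁, …, b_p` are recurrent with the same strictly increasing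
sequence `(n_k)` of positive integers for the multiplication operator `M_a` on a
commutative complex Banach algebra `A`, and that `Σᵢ |φ(bᵢ)| ≥ δ > 0` for all `φ` in a
dense subset of the character space of `A`.  Then `‖a^{n_k} - 1‖ → 0`; in particular
`M_a` is recurrent. -/
theorem recurrent_of_gelfand_bounded_below
    (A : Type*) [NormedCommRing A] [NormedAlgebra ℂ A] [CompleteSpace A]
    (a : A) (p : ℕ) (b : Fin p → A)
    (n : ℕ → ℕ) (hmono : StrictMono n) (hpos : ∀ k, 0 < n k)
    (hb : ∀ i : Fin p, Tendsto (fun k => a ^ n k * b i) atTop (𝓝 (b i)))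
    (δ : ℝ) (hδ : 0 < δ)
    (D : Set (WeakDual.characterSpace ℂ A)) (hD : Dense D)
    (hlow : ∀ φ ∈ D, δ ≤ ∑ i : Fin p, ‖φ (b i)‖) :
    Tendsto (fun k => ‖a ^ n k - 1‖) atTop (𝓝 0) ∧
    Dense {x : A | ∃ m : ℕ → ℕ, StrictMono m ∧ (∀ j, 0 < m j) ∧
      Tendsto (fun j => a ^ m j * x) atTop (𝓝 x)} := by
  have hcont : Continuous fun φ : WeakDual.characterSpace ℂ A => ∑ i, ‖φ (b i)‖ :=
    continuous_finsetSum _ fun i _ =>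
      ((WeakDual.eval_continuous (b i)).comp continuous_subtype_val).norm
  have hspan : Ideal.span (Set.range b) = ⊤ := by
    refine Ideal.span_eq_top_of_forall_character_exists_ne_zero fun φ => ?_
    have hφ : δ ≤ ∑ i, ‖φ (b i)‖ :=
      le_on_closure hlow continuousOn_const hcont.continuousOn (hD φ)
    obtain ⟨i, -, hi⟩ := Finset.exists_ne_zero_of_sum_ne_zero (by linarith : ∑ i, ‖φ (b i)‖ ≠ 0)
    exact ⟨b i, Set.mem_range_self i, norm_ne_zero_iff.1 hi⟩
  have hone : Tendsto (fun k => a ^ n k) atTop (𝓝 1) :=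
    Ideal.tendsto_one_of_span_eq_top hspan (Set.forall_mem_range.2 hb)
  refine ⟨tendsto_iff_norm_sub_tendsto_zero.1 hone, fun x => subset_closure ?_⟩
  exact ⟨n, hmono, hpos, by simpa using hone.mul_const x⟩
end

section
/- Let A be a commutative complex Banach algebra with identity 1, let a ∈ A, and let b be a recurrent vector for M_a, witnessed by a strictly increasing sequence (n_k) of positive integers with a^{n_k} b → b in A. Then for every character φ in the maximal ideal space X of A with φ(b) ≠ 0, one has (φ(a))^{n_k} → 1 as k → ∞, and consequently |φ(a)| = 1. -/
open Filter Topology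

theorem Filter.Tendsto.map_pow_mul {M N F : Type*} [Monoid M] [TopologicalSpace M]
    [Monoid N] [TopologicalSpace N] [FunLike F M N] [MonoidHomClass F M N]
    [ContinuousMapClass F M N] (f : F) {ι : Type*} {l : Filter ι} {n : ι → ℕ} {a b : M}
    (hb : Tendsto (fun k => a ^ n k * b) l (𝓝 b)) :
    Tendsto (fun k => f a ^ n k * f b) l (𝓝 (f b)) := by
  simpa only [Function.comp_def, map_mul, map_pow] using ((map_continuous f).tendsto b).comp hb

theorem tendsto_pow_nhds_one_of_tendsto_pow_mul {G₀ : Type*} [GroupWithZero G₀]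
    [TopologicalSpace G₀] [ContinuousMul G₀] [ContinuousInv₀ G₀] [T1Space G₀]
    {ι : Type*} {l : Filter ι} {n : ι → ℕ} {z w : G₀} (hw : w ≠ 0)
    (h : Tendsto (fun k => z ^ n k * w) l (𝓝 w)) :
    Tendsto (fun k => z ^ n k) l (𝓝 1) :=
  (tendsto_mul_iff_of_ne_zero tendsto_const_nhds hw).mp (by rwa [one_mul])

theorem eq_one_of_tendsto_pow_comp {r : ℝ} (hr : 0 ≤ r) {ι : Type*} {l : Filter ι} [l.NeBot]
    {n : ι → ℕ} (hn : Tendsto n l atTop) (h : Tendsto (fun k => r ^ n k) l (𝓝 1)) :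
    r = 1 := by
  rcases lt_trichotomy r 1 with hlt | heq | hgt
  · exact absurd (tendsto_nhds_unique h
      ((tendsto_pow_atTop_nhds_zero_of_lt_one hr hlt).comp hn)) one_ne_zero
  · exact heq
  · exact absurd ((tendsto_pow_atTop_atTop_of_one_lt hgt).comp hn)
      (not_tendsto_atTop_of_tendsto_nhds h)

theorem norm_eq_one_of_tendsto_pow_comp {𝕜 : Type*} [NormedDivisionRing 𝕜] {z : 𝕜}
    {ι : Type*} {l : Filter ι} [l.NeBot] {n : ι → ℕ} (hn : Tendsto n l atTop)
    (h : Tendsto (fun k => z ^ n k) l (𝓝 1)) : ‖z‖ = 1 :=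
  eq_one_of_tendsto_pow_comp (norm_nonneg z) hn (by simpa only [norm_pow, norm_one] using h.norm)

theorem character_unimodular_of_recurrent_vector_general
    (A : Type*) [NormedCommRing A] [NormedAlgebra ℂ A]
    (a b : A) (n : ℕ → ℕ) (hmono : StrictMono n)
    (hb : Tendsto (fun k => a ^ n k * b) atTop (𝓝 b))
    (φ : WeakDual.characterSpace ℂ A) (hφb : φ b ≠ 0) :
    Tendsto (fun k => (φ a) ^ n k) atTop (𝓝 1) ∧ ‖φ a‖ = 1 := by
  have hpow : Tendsto (fun k => (φ a) ^ n k) atTop (𝓝 1) :=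
    tendsto_pow_nhds_one_of_tendsto_pow_mul hφb (hb.map_pow_mul φ)
  exact ⟨hpow, norm_eq_one_of_tendsto_pow_comp hmono.tendsto_atTop hpow⟩

/-- If `b` is a recurrent vector for the multiplication operator `M_a`
on a commutative complex Banach algebra `A`, witnessed by the strictly increasing
sequence `(n_k)` of positive integers, then for every character `φ` of `A` with
`φ(b) ≠ 0` one has `(φ(a))^{n_k} → 1`, and consequently `|φ(a)| = 1`. -/
theorem character_unimodular_of_recurrent_vector
    (A : Type*) [NormedCommRing A] [NormedAlgebra ℂ A] [CompleteSpace A]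
    (a b : A) (n : ℕ → ℕ) (hmono : StrictMono n) (hpos : ∀ k, 0 < n k)
    (hb : Tendsto (fun k => a ^ n k * b) atTop (𝓝 b))
    (φ : WeakDual.characterSpace ℂ A) (hφb : φ b ≠ 0) :
    Tendsto (fun k => (φ a) ^ n k) atTop (𝓝 1) ∧ ‖φ a‖ = 1 :=
  character_unimodular_of_recurrent_vector_general A a b n hmono hb φ hφb
end

section
/- Let a, b : ℂ → ℂ be continuous on the closed unit disk and analytic on the open unit disk, with b not identically zero. Suppose there exists a strictly increasing sequence (n_k) of positive integers such that sup_{|z| ≤ 1} |a(z)^{n_k} b(z) − b(z)| → 0 as k → ∞. Then there exists a constant c ∈ ℂ with |c| = 1 such that a(z) = c for all z in the closed unit disk; in particular the multiplication operator M_a on the disk algebra is recurrent. -/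
open Filter Topology Metric Set

/-- Let `a, b` be in the disk algebra (continuous on the closed unit
disk, analytic on the open unit disk) with `b` not identically zero.  If
`sup_{|z|≤1} |a(z)^{n_k} b(z) - b(z)| → 0` along a strictly increasing sequence of
positive integers, then `a` is a unimodular constant on the closed disk; in particular
every element of the disk algebra is a recurrent vector for `M_a`, so `M_a` is
recurrent on the disk algebra. -/
theorem disk_algebra_recurrent_of_nonzero_recurrent_vector
    (a b : ℂ → ℂ)
    (ha_cont : ContinuousOn a (closedBall (0 : ℂ) 1))
    (ha_diff : DifferentiableOn ℂ a (ball (0 : ℂ) 1))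
    (hb_cont : ContinuousOn b (closedBall (0 : ℂ) 1))
    (hb_diff : DifferentiableOn ℂ b (ball (0 : ℂ) 1))
    (hb_ne : ∃ z ∈ closedBall (0 : ℂ) 1, b z ≠ 0)
    (n : ℕ → ℕ) (hmono : StrictMono n) (hpos : ∀ k, 0 < n k)
    (hconv : ∀ ε > (0 : ℝ), ∃ N, ∀ k ≥ N, ∀ z ∈ closedBall (0 : ℂ) 1,
      ‖(a z) ^ n k * b z - b z‖ ≤ ε) :
    ∃ c : ℂ, ‖c‖ = 1 ∧ (∀ z ∈ closedBall (0 : ℂ) 1, a z = c) ∧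
      ∀ f : ℂ → ℂ, ContinuousOn f (closedBall (0 : ℂ) 1) →
        DifferentiableOn ℂ f (ball (0 : ℂ) 1) →
        ∃ m : ℕ → ℕ, StrictMono m ∧ (∀ k, 0 < m k) ∧
          ∀ ε > (0 : ℝ), ∃ N, ∀ k ≥ N, ∀ z ∈ closedBall (0 : ℂ) 1,
            ‖(a z) ^ m k * f z - f z‖ ≤ ε := by
  have hball : ball (0:ℂ) 1 ⊆ closedBall (0:ℂ) 1 := ball_subset_closedBall
  -- pointwise convergence of a z ^ n k * b z - b z to 0
  have hpt : ∀ z ∈ closedBall (0:ℂ) 1,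
      Tendsto (fun k => a z ^ n k * b z - b z) atTop (𝓝 0) := by
    intro z hz
    rw [NormedAddCommGroup.tendsto_nhds_zero]
    intro ε hε
    obtain ⟨N, hN⟩ := hconv (ε/2) (by linarith)
    exact eventually_atTop.2 ⟨N, fun k hk => lt_of_le_of_lt (hN k hk z hz) (by linarith)⟩
  -- where b ≠ 0, a z ^ n k → 1
  have hpow1 : ∀ z ∈ closedBall (0:ℂ) 1, b z ≠ 0 →
      Tendsto (fun k => a z ^ n k) atTop (𝓝 1) := by
    intro z hz hbz
    have h1 : Tendsto (fun k => a z ^ n k * b z) atTop (𝓝 (b z)) := by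
      have := (hpt z hz).add_const (b z)
      simpa using this
    have h2 := h1.div_const (b z)
    rw [div_self hbz] at h2
    have : (fun k => a z ^ n k * b z / b z) = fun k => a z ^ n k := by
      funext k; field_simp
    rwa [this] at h2
  -- where b ≠ 0, ‖a z‖ = 1
  have hnorm1 : ∀ z ∈ closedBall (0:ℂ) 1, b z ≠ 0 → ‖a z‖ = 1 := by
    intro z hz hbz
    have hp := hpow1 z hz hbz
    have hnp : Tendsto (fun k => ‖a z‖ ^ n k) atTop (𝓝 1) := by
      have := (continuous_norm.tendsto (1:ℂ)).comp hp
      simpa [Function.comp_def, norm_pow] using this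
    by_contra hne
    rcases lt_or_gt_of_ne hne with hlt | hgt
    · have h0 : Tendsto (fun k => ‖a z‖ ^ n k) atTop (𝓝 0) :=
        (tendsto_pow_atTop_nhds_zero_of_lt_one (norm_nonneg _) hlt).comp
          (hmono.tendsto_atTop)
      exact one_ne_zero (tendsto_nhds_unique hnp h0)
    · have h0 : Tendsto (fun k => ‖a z‖ ^ n k) atTop atTop :=
        (tendsto_pow_atTop_atTop_of_one_lt hgt).comp hmono.tendsto_atTop
      exact not_tendsto_nhds_of_tendsto_atTop h0 1 hnp
  -- b is nonzero at some point of the open ball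
  obtain ⟨z₀, hz₀, hbz₀⟩ := hb_ne
  have hball_conn : IsPreconnected (ball (0:ℂ) 1) := (convex_ball 0 1).isPreconnected
  have hb_an : AnalyticOnNhd ℂ b (ball (0:ℂ) 1) := hb_diff.analyticOnNhd isOpen_ball
  obtain ⟨z₁, hz₁, hbz₁⟩ : ∃ z ∈ ball (0:ℂ) 1, b z ≠ 0 := by
    by_cases h : z₀ ∈ ball (0:ℂ) 1
    · exact ⟨z₀, h, hbz₀⟩
    · -- z₀ on boundary; use continuity
      have hc : ContinuousWithinAt b (closedBall (0:ℂ) 1) z₀ := hb_cont z₀ hz₀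
      have : ∀ᶠ w in 𝓝[closedBall (0:ℂ) 1] z₀, b w ≠ 0 :=
        hc (isOpen_ne.mem_nhds hbz₀)
      have hne : (𝓝[ball (0:ℂ) 1] z₀).NeBot := by
        rw [← closure_ball (0:ℂ) one_ne_zero] at hz₀
        exact mem_closure_iff_nhdsWithin_neBot.1 hz₀
      have h2 : ∀ᶠ w in 𝓝[ball (0:ℂ) 1] z₀, b w ≠ 0 :=
        this.filter_mono (nhdsWithin_mono _ hball)
      have h3 : ∀ᶠ w in 𝓝[ball (0:ℂ) 1] z₀, w ∈ ball (0:ℂ) 1 :=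
        eventually_mem_nhdsWithin
      obtain ⟨w, hw1, hw2⟩ := (h2.and h3).exists
      exact ⟨w, hw2, hw1⟩
  -- the set where b ≠ 0 is dense in the ball; hence ‖a‖ = 1 on the ball
  have hnormball : ∀ z ∈ ball (0:ℂ) 1, ‖a z‖ = 1 := by
    intro z hz
    set S := {w : ℂ | w ∈ ball (0:ℂ) 1 ∧ b w ≠ 0} with hS
    have hzS : z ∈ closure S := by
      by_contra hcl
      have hV : (closure S)ᶜ ∈ 𝓝 z :=
        isClosed_closure.isOpen_compl.mem_nhds hcl
      have hVS : ∀ w ∈ (closure S)ᶜ, w ∉ S := fun w hw hwS => hw (subset_closure hwS)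
      have hev : b =ᶠ[𝓝 z] 0 := by
        filter_upwards [hV, isOpen_ball.mem_nhds hz] with w hw hw'
        by_contra hbw
        exact hVS w hw ⟨hw', hbw⟩
      have := hb_an.eqOn_zero_of_preconnected_of_eventuallyEq_zero hball_conn hz hev
      exact hbz₁ (this hz₁)
    have hneS : (𝓝[S] z).NeBot := mem_closure_iff_nhdsWithin_neBot.1 hzS
    have hSsub : S ⊆ closedBall (0:ℂ) 1 := fun w hw => hball hw.1
    have hta : Tendsto (fun w => ‖a w‖) (𝓝[S] z) (𝓝 ‖a z‖) := by
      have : ContinuousWithinAt a S z :=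
        (ha_cont z (hball hz)).mono hSsub
      exact (continuous_norm.tendsto _).comp this
    have htc : Tendsto (fun w => ‖a w‖) (𝓝[S] z) (𝓝 1) := by
      refine Tendsto.congr' ?_ tendsto_const_nhds
      filter_upwards [eventually_mem_nhdsWithin] with w hw
      exact (hnorm1 w (hSsub hw) hw.2).symm
    exact tendsto_nhds_unique hta htc
  -- maximum modulus: a is constant on the ball
  set c := a 0 with hc
  have h0mem : (0:ℂ) ∈ ball (0:ℂ) 1 := by simp
  have hmax : IsMaxOn (norm ∘ a) (ball (0:ℂ) 1) 0 := by
    intro w hw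
    simp only [Function.comp_apply, mem_setOf_eq]
    rw [hnormball w hw, hnormball 0 h0mem]
  have hconst : EqOn a (Function.const ℂ c) (ball (0:ℂ) 1) :=
    Complex.eqOn_of_isPreconnected_of_isMaxOn_norm hball_conn isOpen_ball ha_diff h0mem hmax
  -- extend to the closed ball by continuity
  have hconst' : ∀ z ∈ closedBall (0:ℂ) 1, a z = c := by
    intro z hz
    have hzc : z ∈ closure (ball (0:ℂ) 1) := by
      rwa [closure_ball (0:ℂ) one_ne_zero]
    have hne : (𝓝[ball (0:ℂ) 1] z).NeBot := mem_closure_iff_nhdsWithin_neBot.1 hzc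
    have hta : Tendsto a (𝓝[ball (0:ℂ) 1] z) (𝓝 (a z)) :=
      (ha_cont z hz).mono hball
    have htc : Tendsto a (𝓝[ball (0:ℂ) 1] z) (𝓝 c) := by
      refine Tendsto.congr' ?_ tendsto_const_nhds
      filter_upwards [eventually_mem_nhdsWithin] with w hw
      exact (hconst hw).symm
    exact tendsto_nhds_unique hta htc
  have hcnorm : ‖c‖ = 1 := by rw [← hconst' z₁ (hball hz₁)]; exact hnormball z₁ hz₁
  -- c ^ n k → 1
  have hcpow : Tendsto (fun k => c ^ n k) atTop (𝓝 1) := by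
    have := hpow1 z₁ (hball hz₁) hbz₁
    rwa [hconst' z₁ (hball hz₁)] at this
  refine ⟨c, hcnorm, hconst', fun f hf_cont _ => ⟨n, hmono, hpos, ?_⟩⟩
  -- bound f on the closed ball
  obtain ⟨M, hM⟩ : ∃ M, ∀ z ∈ closedBall (0:ℂ) 1, ‖f z‖ ≤ M := by
    obtain ⟨M, hM⟩ := (isCompact_closedBall (0:ℂ) 1).exists_bound_of_continuousOn hf_cont
    exact ⟨M, hM⟩
  have hM0 : 0 ≤ M := le_trans (norm_nonneg _) (hM 0 (by simp))
  intro ε hε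
  have hd : (0:ℝ) < ε / (M + 1) := by positivity
  have : ∀ᶠ k in atTop, ‖c ^ n k - 1‖ < ε / (M + 1) := by
    have := hcpow
    rw [Metric.tendsto_atTop] at this
    obtain ⟨N, hN⟩ := this _ hd
    exact eventually_atTop.2 ⟨N, fun k hk => by
      simpa [dist_eq_norm] using hN k hk⟩
  obtain ⟨N, hN⟩ := eventually_atTop.1 this
  refine ⟨N, fun k hk z hz => ?_⟩
  rw [hconst' z hz]
  have : c ^ n k * f z - f z = (c ^ n k - 1) * f z := by ring
  rw [this, norm_mul]
  calc ‖c ^ n k - 1‖ * ‖f z‖ ≤ (ε / (M + 1)) * M := by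
        apply mul_le_mul (le_of_lt (hN k hk)) (hM z hz) (norm_nonneg _) (le_of_lt hd)
    _ ≤ ε := by
        rw [div_mul_eq_mul_div, div_le_iff₀ (by linarith)]
        nlinarith
end

section
/- Let A = (a_{i,j}) be an n × n lower triangular complex matrix that is recurrent as a linear operator on ℂ^n. Suppose 1 ≤ i_1 < i_2 < … < i_k ≤ n are indices, λ ∈ ℂ satisfies λ = a_{i_1,i_1} = … = a_{i_k,i_k}, and a_{j,j} ≠ λ whenever j ∉ {i_1, …, i_k}. Then for each p with 1 ≤ p ≤ k there exists an eigenvector v_{i_p} of A for the eigenvalue λ of the form v_{i_p} = e_{i_p} + Σ_{j=i_p+1}^n x_j(i_p) e_j, where moreover x_j(i_p) = 0 whenever j = i_s with p < s ≤ k. (Here e_1, …, e_n is the canonical basis of ℂ^n.) -/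
/-!
If `φ (A - λ)² = 0`, then `ψ = φ (A - λ)` is a left eigenvector and
`φ Aᵐ = λᵐ φ + m λᵐ⁻¹ ψ`. Pairing these identities with a recurrent vector `x` along its return
times `mₖ` gives `λ^mₖ → 1` and then `mₖ → 0` unless `ψ ⬝ x = 0`; by density `ψ = 0`. So `A - λ`
has no Jordan block of size two, on the left and hence (by rank) on the right: the eigenspace of
`λ` is the whole generalized eigenspace, whose dimension is the number `k` of diagonal entries
equal to `λ`. By forward substitution an eigenvector vanishing at these `k` positions vanishes, so
restricting to them is an isomorphism from the eigenspace onto `ℂᵏ`; the preimage of the `p`-th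
basis vector is the required eigenvector.
-/

open Filter Topology Matrix Module Polynomial

namespace Matrix

variable {ι K : Type*} [Fintype ι] [Field K]

theorem rank_add_finrank_ker_mulVecLin {m : Type*} [Fintype m] (M : Matrix m ι K) :
    M.rank + finrank K (LinearMap.ker M.mulVecLin) = Fintype.card ι := by
  rw [rank, LinearMap.finrank_range_add_finrank_ker, finrank_fintype_fun_eq_card]

theorem ker_mulVecLin_mul_self_eq_of_transpose {N : Matrix ι ι K}
    (h : LinearMap.ker (Nᵀ * Nᵀ).mulVecLin = LinearMap.ker Nᵀ.mulVecLin) :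
    LinearMap.ker (N * N).mulVecLin = LinearMap.ker N.mulVecLin := by
  have hrank : (N * N).rank = N.rank := by
    have h1 := rank_add_finrank_ker_mulVecLin (Nᵀ * Nᵀ)
    have h2 := rank_add_finrank_ker_mulVecLin Nᵀ
    rw [← rank_transpose, transpose_mul, ← rank_transpose N]
    rw [h] at h1
    omega
  have hle : LinearMap.ker N.mulVecLin ≤ LinearMap.ker (N * N).mulVecLin := by
    rw [mulVecLin_mul]
    exact LinearMap.ker_le_ker_comp _ _
  refine (Submodule.eq_of_le_of_finrank_eq hle ?_).symm
  have h1 := rank_add_finrank_ker_mulVecLin (N * N)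
  have h2 := rank_add_finrank_ker_mulVecLin N
  omega

variable [DecidableEq ι]

theorem genEigenspace_toLin' (A : Matrix ι ι K) (μ : K) (k : ℕ) :
    End.genEigenspace (toLin' A) μ k = LinearMap.ker ((A - μ • 1) ^ k).mulVecLin := by
  rw [End.genEigenspace_nat, ← toLin'_apply', toLin'_pow]
  congr 2
  rw [map_sub, map_smul, toLin'_one, End.one_eq_id]

end Matrix

theorem Module.End.finrank_eigenspace_eq_rootMultiplicity {K V : Type*} [Field K]
    [AddCommGroup V] [Module K V] [FiniteDimensional K V] {f : End K V} {μ : K}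
    (h : f.genEigenspace μ 2 = f.eigenspace μ) :
    finrank K (f.eigenspace μ) = f.charpoly.rootMultiplicity μ := by
  have hker : LinearMap.ker ((f - μ • 1) ^ 1) = LinearMap.ker ((f - μ • 1) ^ (1 : ℕ).succ) := by
    rw [← genEigenspace_nat, ← genEigenspace_nat]
    exact h.symm
  have hmax : f.maxGenEigenspace μ = f.eigenspace μ := by
    refine le_antisymm (fun x hx => ?_) eigenspace_le_maxGenEigenspace
    obtain ⟨k, hk⟩ := (mem_maxGenEigenspace f μ x).1 hx
    rcases k with _ | k
    · simp_all
    · rw [eigenspace, ← Nat.cast_one, genEigenspace_nat, ker_pow_constant hker k, add_comm]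
      exact hk
  rw [← hmax, LinearMap.finrank_maxGenEigenspace_eq]

namespace Matrix.IsLowerTriangular

variable {ι : Type*} [Fintype ι] [LinearOrder ι]

theorem apply_eq_zero_of_mulVec_eq_smul {R : Type*} [Ring R] [NoZeroDivisors R]
    {A : Matrix ι ι R} (hA : A.IsLowerTriangular) {μ : R} {v : ι → R}
    (hv : A *ᵥ v = μ • v) {i : ι} (h : ∀ j ≤ i, A j j = μ → v j = 0) : v i = 0 := by
  induction i using WellFoundedLT.induction with
  | _ i ih =>
  have hrow : A i i * v i = μ * v i := by
    have hvi := congrFun hv i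
    rwa [mulVec, dotProduct, Finset.sum_eq_single i] at hvi
    · intro j _ hji
      rcases hji.lt_or_gt with hlt | hgt
      · rw [ih j hlt fun l hl => h l (hl.trans hlt.le), mul_zero]
      · rw [hA hgt, zero_mul]
    · simp
  have hdiag : (A i i - μ) * v i = 0 := by rw [sub_mul, hrow, sub_self]
  rcases mul_eq_zero.1 hdiag with h0 | h0
  · exact h i le_rfl (sub_eq_zero.1 h0)
  · exact h0

variable [DecidableEq ι]

theorem charpoly_eq {R : Type*} [CommRing R] {A : Matrix ι ι R} (hA : A.IsLowerTriangular) :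
    A.charpoly = ∏ i, (X - C (A i i)) := by
  simp [charpoly, det_of_isLowerTriangular _ hA.charmatrix]

theorem rootMultiplicity_charpoly {R : Type*} [CommRing R] [IsDomain R] {A : Matrix ι ι R}
    (hA : A.IsLowerTriangular) (μ : R) :
    A.charpoly.rootMultiplicity μ = Nat.card {i // A i i = μ} := by
  classical
  have hprod : A.charpoly = ((Finset.univ.val.map fun i => A i i).map fun a => X - C a).prod := by
    rw [hA.charpoly_eq, Multiset.map_map]
    rfl
  rw [hprod, ← count_roots, roots_multiset_prod_X_sub_C, Multiset.count_map,
    Nat.card_eq_fintype_card, Fintype.card_subtype]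
  simp only [eq_comm]
  rfl

variable {K : Type*} [Field K] {A : Matrix ι ι K}

theorem exists_eigenvector_eq_single (hA : A.IsLowerTriangular) {μ : K}
    (hdim : finrank K (End.eigenspace (toLin' A) μ) = Nat.card {j // A j j = μ})
    {i : ι} (hi : A i i = μ) :
    ∃ v : ι → K, A *ᵥ v = μ • v ∧ v i = 1 ∧ (∀ j < i, v j = 0) ∧ ∀ j ≠ i, A j j = μ → v j = 0 := by
  classical
  set E := End.eigenspace (toLin' A) μ
  have hE : ∀ v : E, A *ᵥ v = μ • v := fun v => End.mem_eigenspace_iff.1 v.2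
  let restrict : E →ₗ[K] ({j // A j j = μ} → K) :=
    (LinearMap.funLeft K K Subtype.val).comp E.subtype
  have hinj : Function.Injective restrict := by
    refine (injective_iff_map_eq_zero restrict).2 fun v hv => Subtype.ext (funext fun j => ?_)
    exact hA.apply_eq_zero_of_mulVec_eq_smul (hE v) fun l _ hl => congrFun hv ⟨l, hl⟩
  have hsurj : Function.Surjective restrict := by
    refine (LinearMap.injective_iff_surjective_of_finrank_eq_finrank ?_).1 hinj
    rw [hdim, finrank_fintype_fun_eq_card, Nat.card_eq_fintype_card]
  obtain ⟨v, hv⟩ := hsurj (Pi.single ⟨i, hi⟩ 1)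
  have hv_diag (j : ι) (hj : A j j = μ) : v.1 j = if j = i then 1 else 0 := by
    simpa [restrict, Pi.single_apply, Subtype.ext_iff] using congrFun hv ⟨j, hj⟩
  refine ⟨v, hE v, by simpa using hv_diag i hi, fun j hj => ?_,
    fun j hji hj => by simpa [hji] using hv_diag j hj⟩
  exact hA.apply_eq_zero_of_mulVec_eq_smul (hE v) fun l hl hl' => by
    simpa [(hl.trans_lt hj).ne] using hv_diag l hl'

end Matrix.IsLowerTriangular

theorem eq_zero_of_tendsto_pow_mul {𝕜 : Type*} [RCLike 𝕜] {μ c d : 𝕜} {m : ℕ → ℕ}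
    (hm : StrictMono m) (hc : Tendsto (fun k => μ ^ m k * c) atTop (𝓝 c))
    (hd : Tendsto (fun k => μ ^ m k * d + m k * (μ ^ m k * c)) atTop (𝓝 d)) : c = 0 := by
  by_contra hc0
  have hpow : Tendsto (fun k => μ ^ m k) atTop (𝓝 1) := by
    simpa [mul_div_assoc, div_self hc0] using hc.div_const c
  have hlin : Tendsto (fun k => (m k : 𝕜) * (μ ^ m k * c)) atTop (𝓝 0) := by
    simpa using hd.sub (hpow.mul_const d)
  have hcast : Tendsto (fun k => (m k : 𝕜)) atTop (𝓝 0) := by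
    refine (zero_div c ▸ hlin.div hc hc0).congr' ?_
    filter_upwards [hc.eventually_ne hc0] with k hk
    exact mul_div_cancel_right₀ _ hk
  refine not_tendsto_atTop_of_tendsto_nhds hcast.norm ?_
  simpa [Function.comp_def] using tendsto_natCast_atTop_atTop.comp hm.tendsto_atTop

namespace Matrix

section CommRing

variable {ι R : Type*} [Fintype ι] [DecidableEq ι] [CommRing R] {A : Matrix ι ι R} {μ : R}
  {φ ψ : ι → R}

theorem vecMul_pow_of_vecMul_eq_smul (hψ : ψ ᵥ* A = μ • ψ) (m : ℕ) :
    ψ ᵥ* A ^ m = μ ^ m • ψ := by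
  induction m with
  | zero => simp
  | succ m ih => rw [pow_succ, ← vecMul_vecMul, ih, smul_vecMul, hψ, smul_smul, pow_succ]

-- Multiplied by `μ` so that no exponent `m - 1` appears.
theorem smul_vecMul_pow_of_vecMul_eq_smul_add (hψ : ψ ᵥ* A = μ • ψ) (hφ : φ ᵥ* A = μ • φ + ψ)
    (m : ℕ) : μ • (φ ᵥ* A ^ m) = μ ^ m • (μ • φ) + (m * μ ^ m) • ψ := by
  induction m with
  | zero => simp
  | succ m ih =>
    rw [pow_succ, ← vecMul_vecMul, ← smul_vecMul, ih, add_vecMul, smul_vecMul, smul_vecMul,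
      smul_vecMul, hφ, hψ]
    push_cast
    module

def IsRecurrentVector [TopologicalSpace R] (A : Matrix ι ι R) (x : ι → R) : Prop :=
  ∃ m : ℕ → ℕ, StrictMono m ∧ (∀ k, 0 < m k) ∧ Tendsto (fun k => (A ^ m k).mulVec x) atTop (𝓝 x)

end CommRing

variable {ι 𝕜 : Type*} [Fintype ι] [DecidableEq ι] [RCLike 𝕜] {A : Matrix ι ι 𝕜} {μ : 𝕜}
  {φ ψ : ι → 𝕜}

theorem IsRecurrentVector.dotProduct_eq_zero {x : ι → 𝕜} (hx : A.IsRecurrentVector x)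
    (hψ : ψ ᵥ* A = μ • ψ) (hφ : φ ᵥ* A = μ • φ + ψ) : ψ ⬝ᵥ x = 0 := by
  obtain ⟨m, hm, -, hlim⟩ := hx
  have hdot (w : ι → 𝕜) : Tendsto (fun k => w ⬝ᵥ (A ^ m k *ᵥ x)) atTop (𝓝 (w ⬝ᵥ x)) :=
    ((continuous_const.dotProduct continuous_id).tendsto x).comp hlim
  refine eq_zero_of_tendsto_pow_mul hm (μ := μ) (d := μ * (φ ⬝ᵥ x)) ?_ ?_
  · simpa [dotProduct_mulVec, vecMul_pow_of_vecMul_eq_smul hψ] using hdot ψ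
  · refine ((hdot φ).const_mul μ).congr fun k => ?_
    rw [dotProduct_mulVec, ← smul_eq_mul μ, ← smul_dotProduct,
      smul_vecMul_pow_of_vecMul_eq_smul_add hψ hφ]
    simp [add_dotProduct, smul_dotProduct, mul_assoc]

theorem vecMul_sub_smul_one_eq_zero (hA : Dense {x | A.IsRecurrentVector x}) (μ : 𝕜)
    {φ : ι → 𝕜} (h : φ ᵥ* (A - μ • 1) ᵥ* (A - μ • 1) = 0) : φ ᵥ* (A - μ • 1) = 0 := by
  set ψ := φ ᵥ* (A - μ • 1)
  have hψ : ψ ᵥ* A = μ • ψ := by simpa [vecMul_sub, vecMul_smul, sub_eq_zero] using h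
  have hφ : φ ᵥ* A = μ • φ + ψ := by simp [ψ, vecMul_sub, vecMul_smul]
  refine dotProduct_eq_zero_iff.1 (congrFun ?_)
  exact Continuous.ext_on hA (continuous_const.dotProduct continuous_id) continuous_const
    fun x hx => hx.dotProduct_eq_zero hψ hφ

theorem genEigenspace_toLin'_two_eq_eigenspace (hA : Dense {x | A.IsRecurrentVector x})
    (μ : 𝕜) : End.genEigenspace (toLin' A) μ 2 = End.eigenspace (toLin' A) μ := by
  have h2 := genEigenspace_toLin' A μ 2
  have h1 := genEigenspace_toLin' A μ 1
  push_cast at h1 h2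
  rw [End.eigenspace, h1, h2, pow_two, pow_one]
  refine ker_mulVecLin_mul_self_eq_of_transpose (SetLike.ext fun φ => ?_)
  simp only [LinearMap.mem_ker, mulVecLin_apply, ← mulVec_mulVec, mulVec_transpose]
  exact ⟨vecMul_sub_smul_one_eq_zero hA μ, fun h => by rw [h, zero_vecMul]⟩

end Matrix

theorem lower_triangular_recurrent_eigenvectors_general
    (n : ℕ) (A : Matrix (Fin n) (Fin n) ℂ)
    (hlt : ∀ i j : Fin n, i < j → A i j = 0)
    (hrec : Dense {x : Fin n → ℂ | ∃ m : ℕ → ℕ, StrictMono m ∧ (∀ k, 0 < m k) ∧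
      Tendsto (fun k => (A ^ m k).mulVec x) atTop (𝓝 x)})
    (k : ℕ) (idx : Fin k → Fin n) (hidx : StrictMono idx) (lam : ℂ)
    (hdiag : ∀ s : Fin k, A (idx s) (idx s) = lam) :
    ∀ p : Fin k, ∃ v : Fin n → ℂ,
      A.mulVec v = lam • v ∧
      v (idx p) = 1 ∧
      (∀ j : Fin n, j < idx p → v j = 0) ∧
      (∀ s : Fin k, p < s → v (idx s) = 0) := by
  intro p
  have hA : A.IsLowerTriangular := fun i j h => hlt i j h
  have hdim : finrank ℂ (End.eigenspace (toLin' A) lam) = Nat.card {j // A j j = lam} := by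
    rw [End.finrank_eigenspace_eq_rootMultiplicity
      (genEigenspace_toLin'_two_eq_eigenspace hrec lam), charpoly_toLin',
      hA.rootMultiplicity_charpoly]
  obtain ⟨v, hv, hvp, hlow, hother⟩ := hA.exists_eigenvector_eq_single hdim (hdiag p)
  exact ⟨v, hv, hvp, hlow, fun s hs => hother _ (hidx.injective.ne hs.ne') (hdiag s)⟩

/-- Let `A` be an `n × n` lower triangular complex matrix which is
recurrent as an operator on `ℂⁿ`.  If `λ` occurs on the diagonal exactly at the positions
`i₁ < i₂ < ⋯ < i_k`, then for each `p` there is an eigenvector `v` of `A` for `λ` of the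
form `v = e_{i_p} + Σ_{j > i_p} x_j e_j` with `x_{i_s} = 0` for `p < s ≤ k`. -/
theorem lower_triangular_recurrent_eigenvectors
    (n : ℕ) (A : Matrix (Fin n) (Fin n) ℂ)
    (hlt : ∀ i j : Fin n, i < j → A i j = 0)
    (hrec : Dense {x : Fin n → ℂ | ∃ m : ℕ → ℕ, StrictMono m ∧ (∀ k, 0 < m k) ∧
      Tendsto (fun k => (A ^ m k).mulVec x) atTop (𝓝 x)})
    (k : ℕ) (idx : Fin k → Fin n) (hidx : StrictMono idx) (lam : ℂ)
    (hdiag : ∀ s : Fin k, A (idx s) (idx s) = lam)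
    (hne : ∀ j : Fin n, j ∉ Set.range idx → A j j ≠ lam) :
    ∀ p : Fin k, ∃ v : Fin n → ℂ,
      A.mulVec v = lam • v ∧
      v (idx p) = 1 ∧
      (∀ j : Fin n, j < idx p → v j = 0) ∧
      (∀ s : Fin k, p < s → v (idx s) = 0) :=
  lower_triangular_recurrent_eigenvectors_general n A hlt hrec k idx hidx lam hdiag
end

section
/- Let 𝕋 be the unit circle with normalized Lebesgue (Haar) measure |·|, let (n_j) be a strictly increasing sequence of positive integers, and let E ⊆ 𝕋 be a measurable set with |E| > 0. Then it is not the case that z^{n_j} → 1 as j → ∞ for almost every z ∈ E. -/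
open Filter Topology MeasureTheory

/-- The normalized Lebesgue (Haar) measure on the unit circle `𝕋 ⊆ ℂ`, realized as the
pushforward of Lebesgue measure on `[0,1)` under `t ↦ e^{2πit}`. -/
noncomputable def circleHaar : Measure ℂ :=
  Measure.map (fun t : ℝ => Complex.exp ((2 * Real.pi * t : ℝ) * Complex.I))
    (volume.restrict (Set.Ico (0 : ℝ) 1))

/-!
If `z ^ n j → 1` almost everywhere on `E`, dominated convergence gives
`∫_E z ^ n j → |E|`. Pulled back to `[0, 1)` these integrals are Fourier coefficients of the
indicator of `E` at frequencies `n j → ∞`, so by the Riemann–Lebesgue lemma they tend to `0`.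
Hence `|E| = 0`.
-/

open scoped FourierTransform

instance : IsProbabilityMeasure circleHaar where
  measure_univ := by
    rw [circleHaar, Measure.map_apply (by fun_prop) MeasurableSet.univ]
    simp [Real.volume_Ico]

lemma tendsto_neg_natCast_cocompact : Tendsto (fun m : ℕ => -(m : ℝ)) atTop (cocompact ℝ) := by
  rw [cocompact_eq_atBot_atTop]
  exact (tendsto_neg_atTop_atBot.comp tendsto_natCast_atTop_atTop).mono_right le_sup_left

lemma fourierChar_neg_mul_neg_natCast (t : ℝ) (m : ℕ) :
    (𝐞 (-(t * -(m : ℝ))) : ℂ) = Complex.exp ((2 * Real.pi * t : ℝ) * Complex.I) ^ m := by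
  rw [Real.fourierChar_apply, ← Complex.exp_nat_mul]
  push_cast
  ring_nf

theorem tendsto_integral_mul_pow_circleHaar {f : ℂ → ℂ} (hf : AEStronglyMeasurable f circleHaar) :
    Tendsto (fun m : ℕ => ∫ z, f z * z ^ m ∂circleHaar) atTop (𝓝 0) := by
  set e : ℝ → ℂ := fun t => Complex.exp ((2 * Real.pi * t : ℝ) * Complex.I)
  have he : Measurable e := by fun_prop
  have key (m : ℕ) : ∫ z, f z * z ^ m ∂circleHaar
      = ∫ t, 𝐞 (-(t * -(m : ℝ))) • (Set.Ico (0 : ℝ) 1).indicator (f ∘ e) t := by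
    change ∫ z, f z * z ^ m ∂(Measure.map e _) = _
    have hfm : AEStronglyMeasurable (fun z => f z * z ^ m) circleHaar :=
      hf.mul (continuous_pow m).aestronglyMeasurable
    rw [integral_map he.aemeasurable hfm, ← integral_indicator measurableSet_Ico]
    congr 1 with t
    by_cases ht : t ∈ Set.Ico (0 : ℝ) 1
    · rw [Set.indicator_of_mem ht, Set.indicator_of_mem ht, Circle.smul_def,
        fourierChar_neg_mul_neg_natCast, smul_eq_mul, mul_comm]
      rfl
    · simp [ht]
  simp_rw [key]
  exact (Real.tendsto_integral_exp_smul_cocompact _).comp tendsto_neg_natCast_cocompact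

theorem tendsto_setIntegral_pow_circleHaar {E : Set ℂ} (hE : MeasurableSet E) :
    Tendsto (fun m : ℕ => ∫ z in E, z ^ m ∂circleHaar) atTop (𝓝 0) := by
  have hind (m : ℕ) : ∫ z in E, z ^ m ∂circleHaar = ∫ z, E.indicator 1 z * z ^ m ∂circleHaar := by
    rw [← integral_indicator hE]
    congr 1 with z
    by_cases hz : z ∈ E <;> simp [hz]
  simpa only [hind] using
    tendsto_integral_mul_pow_circleHaar (aestronglyMeasurable_one.indicator hE)

theorem tendsto_setIntegral_pow_of_ae_tendsto_one {μ : Measure ℂ} [IsFiniteMeasure μ] {E : Set ℂ}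
    (hE : MeasurableSet E) (hE_ball : E ⊆ Metric.closedBall 0 1) {ι : Type*} {l : Filter ι}
    [l.IsCountablyGenerated] {n : ι → ℕ}
    (h : ∀ᵐ z ∂μ.restrict E, Tendsto (fun j => z ^ n j) l (𝓝 1)) :
    Tendsto (fun j => ∫ z in E, z ^ n j ∂μ) l (𝓝 (μ.real E : ℂ)) := by
  have hlim := tendsto_integral_filter_of_dominated_convergence (fun _ => (1 : ℝ))
    (Eventually.of_forall fun j => (continuous_pow (n j)).aestronglyMeasurable)
    (Eventually.of_forall fun j => ?_) (integrable_const _) h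
  · simpa using hlim
  filter_upwards [ae_restrict_mem hE] with z hz
  simpa [norm_pow] using pow_le_one₀ (norm_nonneg z) (by simpa using hE_ball hz)

theorem not_ae_pow_tendsto_one_general
    (n : ℕ → ℕ) (hmono : StrictMono n)
    (E : Set ℂ) (hE : MeasurableSet E) (hE𝕋 : E ⊆ Metric.sphere (0 : ℂ) 1)
    (hpos' : 0 < circleHaar E) :
    ¬ (∀ᵐ z ∂(circleHaar.restrict E),
        Tendsto (fun j => z ^ n j) atTop (𝓝 (1 : ℂ))) := by
  intro h
  have hlim := tendsto_setIntegral_pow_of_ae_tendsto_one hE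
    (hE𝕋.trans Metric.sphere_subset_closedBall) h
  have hzero := (tendsto_setIntegral_pow_circleHaar hE).comp hmono.tendsto_atTop
  have : circleHaar.real E = 0 := by exact_mod_cast tendsto_nhds_unique hlim hzero
  exact hpos'.ne' ((measureReal_eq_zero_iff).1 this)

/-- If `E ⊆ 𝕋` is measurable with `|E| > 0` and `(n_j)` is a strictly
increasing sequence of positive integers, then it is not the case that `z^{n_j} → 1`
for almost every `z ∈ E`. -/
theorem not_ae_pow_tendsto_one
    (n : ℕ → ℕ) (hmono : StrictMono n) (hpos : ∀ j, 0 < n j)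
    (E : Set ℂ) (hE : MeasurableSet E) (hE𝕋 : E ⊆ Metric.sphere (0 : ℂ) 1)
    (hpos' : 0 < circleHaar E) :
    ¬ (∀ᵐ z ∂(circleHaar.restrict E),
        Tendsto (fun j => z ^ n j) atTop (𝓝 (1 : ℂ))) :=
  not_ae_pow_tendsto_one_general n hmono E hE hE𝕋 hpos'
end

section
/- Let 𝕋 be the unit circle with normalized Lebesgue (Haar) measure |·|, let (n_j) be a strictly increasing sequence of positive integers, and let E ⊆ 𝕋 be a measurable set with |E| > 0. Then the set limsup_{j→∞} F_{n_j}(E) = ⋂_{k≥1} ⋃_{j≥k} {z^{n_j} : z ∈ E} has full outer measure: |limsup_{j→∞} F_{n_j}(E)| = 1. -/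
/-!
Lift everything to `ℝ` through `t ↦ e^{2πit}`: `E` becomes a set `A` of positive measure and a
set `S ⊆ 𝕋` of positive outer measure becomes a `1`-periodic set `Q`. If `x` is a Lebesgue
density point of `A` and `r` is small, `A` fills all but a tiny proportion of `[x - r, x + r]`,
whereas for large `N` the `1/N`-periodic set `{t | N t ∈ Q}` fills a fixed proportion of it;
so some `t ∈ A` has `N t ∈ Q`, i.e. `S` meets `F_N(E)` for all large `N`. Applied to the sets
`S` avoiding `F_{n_j}(E)` for all `j ≥ k`, this shows that the complement of the limsup is null.
-/

open Filter Topology MeasureTheory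

open Set
open Metric (closedBall)
open scoped ENNReal Real

theorem MeasureTheory.Measure.map_restrict_apply_of_injOn {α β : Type*} [TopologicalSpace α]
    [PolishSpace α] [MeasurableSpace α] [BorelSpace α] [TopologicalSpace β] [T2Space β]
    [MeasurableSpace β] [BorelSpace β] (μ : Measure α) {f : α → β} {s : Set α}
    (hs : MeasurableSet s) (hf : Continuous f) (hinj : InjOn f s) (t : Set β) :
    (μ.restrict s).map f t = μ (f ⁻¹' t ∩ s) := by
  have hemb := hf.continuousOn.measurableEmbedding hs hinj
  rw [← map_comap_subtype_coe hs, map_map hf.measurable measurable_subtype_coe,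
    ← s.domRestrict_eq, hemb.map_apply, comap_subtype_coe_apply hs, s.domRestrict_eq,
    preimage_comp, Subtype.image_preimage_coe, inter_comm]

namespace Function.Periodic

variable {Q : Set ℝ}

theorem volume_inter_Ico_intCast (hQ : Periodic (· ∈ Q) 1) (m : ℤ) :
    volume (Q ∩ Ico (m : ℝ) (m + 1)) = volume (Q ∩ Ico 0 1) := by
  rw [← measure_preimage_add_right volume (m : ℝ), preimage_inter, preimage_add_const_Ico,
    sub_self, add_sub_cancel_left]
  congr 2
  ext t
  simpa using (hQ.int_mul m t).to_iff

theorem natCast_mul_volume_inter_Ico_le (hQ : Periodic (· ∈ Q) 1) (m : ℤ) (K : ℕ) :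
    K * volume (Q ∩ Ico 0 1) ≤ volume (Q ∩ Ico (m : ℝ) (m + K)) := by
  induction K with
  | zero => simp
  | succ K ih =>
    have hsplit := measure_inter_add_sdiff (μ := volume) (Q ∩ Ico (m : ℝ) (m + (K + 1 : ℕ)))
      (measurableSet_Iio (a := (m : ℝ) + K))
    rw [inter_assoc, Ico_inter_Iio, inter_sdiff_assoc, Ico_sdiff_Iio, min_eq_right (by simp),
      max_eq_right (by simp), Nat.cast_succ, ← add_assoc] at hsplit
    have hblock := hQ.volume_inter_Ico_intCast (m + K)
    push_cast at hblock
    push_cast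
    rw [← add_assoc, ← hsplit, hblock, add_mul, one_mul]
    gcongr

theorem ofReal_mul_volume_inter_Icc_le (hQ : Periodic (· ∈ Q) 1) (a b : ℝ) :
    ENNReal.ofReal (b - a - 2) * volume (Q ∩ Ico 0 1) ≤ volume (Q ∩ Icc a b) := by
  set K := ⌊b - a - 1⌋₊
  have hK : ENNReal.ofReal (b - a - 2) ≤ K := by
    rw [← ENNReal.ofReal_natCast]
    exact ENNReal.ofReal_le_ofReal (by linarith [Nat.lt_floor_add_one (b - a - 1)])
  calc ENNReal.ofReal (b - a - 2) * volume (Q ∩ Ico 0 1)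
      ≤ K * volume (Q ∩ Ico 0 1) := by gcongr
    _ ≤ volume (Q ∩ Ico (⌈a⌉ : ℝ) (⌈a⌉ + K)) := hQ.natCast_mul_volume_inter_Ico_le _ _
    _ ≤ volume (Q ∩ Icc a b) := by
      refine measure_mono fun t ⟨htQ, hta, htb⟩ => ⟨htQ, (Int.le_ceil a).trans hta, ?_⟩
      have hK0 : (0 : ℝ) < K := by linarith
      have hK1 : 1 ≤ b - a - 1 := Nat.floor_pos.1 (by exact_mod_cast hK0)
      linarith [Nat.floor_le (by linarith : 0 ≤ b - a - 1), Int.ceil_lt_add_one a]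

theorem ofReal_mul_volume_preimage_mul_inter_closedBall_le (hQ : Periodic (· ∈ Q) 1) {N : ℝ}
    (hN : 0 < N) (x r : ℝ) :
    ENNReal.ofReal (2 * r - 2 / N) * volume (Q ∩ Ico 0 1) ≤
      volume ((N * ·) ⁻¹' Q ∩ closedBall x r) := by
  have hpre : (N * ·) ⁻¹' Q ∩ closedBall x r =
      (N * ·) ⁻¹' (Q ∩ Icc (N * (x - r)) (N * (x + r))) := by
    rw [preimage_inter, preimage_const_mul_Icc₀ _ _ hN, mul_div_cancel_left₀ _ hN.ne',
      mul_div_cancel_left₀ _ hN.ne', Real.closedBall_eq_Icc]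
  rw [hpre, Real.volume_preimage_mul_left hN.ne', abs_of_pos (inv_pos.2 hN)]
  calc ENNReal.ofReal (2 * r - 2 / N) * volume (Q ∩ Ico 0 1)
      = ENNReal.ofReal N⁻¹ *
          (ENNReal.ofReal (N * (x + r) - N * (x - r) - 2) * volume (Q ∩ Ico 0 1)) := by
        rw [← mul_assoc, ← ENNReal.ofReal_mul (by positivity)]
        congr 2
        field_simp
        ring
    _ ≤ _ := by grw [hQ.ofReal_mul_volume_inter_Icc_le]

end Function.Periodic

theorem exists_volume_closedBall_sdiff_lt {A : Set ℝ} (hA : MeasurableSet A)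
    (hA0 : volume A ≠ 0) {ε : ℝ≥0∞} (hε : ε ≠ 0) :
    ∃ x r, 0 < r ∧ volume (closedBall x r \ A) < ε * volume (closedBall x r) := by
  obtain ⟨x, hxA, hx⟩ := Measure.exists_mem_of_measure_ne_zero_of_ae hA0 <| ae_restrict_of_ae <|
    Besicovitch.ae_tendsto_measure_inter_div_of_measurableSet volume hA.compl
  rw [indicator_of_notMem (notMem_compl_iff.2 hxA)] at hx
  obtain ⟨r, hr, hr0⟩ := ((hx.eventually (gt_mem_nhds (pos_iff_ne_zero.2 hε))).and
    self_mem_nhdsWithin).exists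
  refine ⟨x, r, hr0, ?_⟩
  rw [sdiff_eq, inter_comm]
  exact (ENNReal.div_lt_iff (Or.inl (by simp [hr0])) (Or.inl measure_closedBall_lt_top.ne)).1 hr

theorem eventually_exists_natCast_mul_mem {A Q : Set ℝ} (hA : MeasurableSet A)
    (hA0 : volume A ≠ 0) (hQ : Function.Periodic (· ∈ Q) 1)
    (hQ0 : volume (Q ∩ Ico 0 1) ≠ 0) :
    ∀ᶠ N : ℕ in atTop, ∃ t ∈ A, (N : ℝ) * t ∈ Q := by
  set α := volume (Q ∩ Ico 0 1)
  obtain ⟨x, r, hr, hxr⟩ := exists_volume_closedBall_sdiff_lt hA hA0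
    (ENNReal.div_ne_zero.2 ⟨hQ0, ENNReal.ofNat_ne_top (n := 2)⟩)
  filter_upwards [eventually_ge_atTop ⌈2 / r⌉₊] with N hN
  by_contra! hdisj
  have h2N : 2 / r ≤ N := (Nat.le_ceil _).trans (by exact_mod_cast hN)
  have hN0 : (0 : ℝ) < N := (by positivity : (0 : ℝ) < 2 / r).trans_le h2N
  have hsub : ((N : ℝ) * ·) ⁻¹' Q ∩ closedBall x r ⊆ closedBall x r \ A :=
    fun t ht => ⟨ht.2, fun htA => hdisj t htA ht.1⟩
  have : ENNReal.ofReal r * α < ENNReal.ofReal r * α := calc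
    ENNReal.ofReal r * α ≤ ENNReal.ofReal (2 * r - 2 / N) * α := by
        gcongr
        linarith [(div_le_iff₀' hN0).2 ((div_le_iff₀ hr).1 h2N)]
    _ ≤ volume (((N : ℝ) * ·) ⁻¹' Q ∩ closedBall x r) :=
        hQ.ofReal_mul_volume_preimage_mul_inter_closedBall_le hN0 x r
    _ ≤ volume (closedBall x r \ A) := measure_mono hsub
    _ < α / 2 * volume (closedBall x r) := hxr
    _ = ENNReal.ofReal r * α := by
        rw [Real.volume_closedBall, ENNReal.ofReal_mul zero_le_two, ENNReal.ofReal_ofNat,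
          ← mul_assoc, ENNReal.div_mul_cancel two_ne_zero ENNReal.ofNat_ne_top, mul_comm]
  exact this.false

noncomputable def expTwoPiI (t : ℝ) : ℂ := Circle.exp (2 * π * t)

theorem continuous_expTwoPiI : Continuous expTwoPiI := by
  unfold expTwoPiI; fun_prop

theorem periodic_expTwoPiI : Function.Periodic expTwoPiI 1 := fun t => by
  simp [expTwoPiI, mul_add, Circle.exp_add]

theorem expTwoPiI_pow (N : ℕ) (t : ℝ) : expTwoPiI t ^ N = expTwoPiI (N * t) := by
  rw [expTwoPiI, expTwoPiI, ← Circle.coe_pow, ← Circle.exp_nsmul, nsmul_eq_mul, mul_left_comm]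

theorem injOn_expTwoPiI : InjOn expTwoPiI (Ico 0 1) := by
  refine Subtype.val_injective.comp_injOn <|
    (Circle.exp_injOn_Ico (a := 0) (b := 2 * π) (by simp)).comp
      (mul_right_injective₀ (by positivity)).injOn fun t ht => ?_
  constructor <;> nlinarith [ht.1, ht.2, Real.pi_pos]

theorem circleHaar_apply (S : Set ℂ) : circleHaar S = volume (expTwoPiI ⁻¹' S ∩ Ico 0 1) :=
  volume.map_restrict_apply_of_injOn measurableSet_Ico continuous_expTwoPiI injOn_expTwoPiI S

instance inst_s14 : IsProbabilityMeasure circleHaar := ⟨by simp [circleHaar_apply]⟩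

theorem eventually_exists_pow_mem {E S : Set ℂ} (hE : MeasurableSet E) (hE0 : circleHaar E ≠ 0)
    (hS0 : circleHaar S ≠ 0) : ∀ᶠ N : ℕ in atTop, ∃ z ∈ E, z ^ N ∈ S := by
  rw [circleHaar_apply] at hE0 hS0
  filter_upwards [eventually_exists_natCast_mul_mem
    ((continuous_expTwoPiI.measurable hE).inter measurableSet_Ico) hE0
    (periodic_expTwoPiI.comp (· ∈ S)) hS0] with N ⟨t, ht, htS⟩
  exact ⟨expTwoPiI t, ht.1, by rwa [expTwoPiI_pow]⟩

theorem limsup_power_images_full_measure_general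
    (n : ℕ → ℕ) (hmono : StrictMono n)
    (E : Set ℂ) (hE : MeasurableSet E)
    (hpos' : 0 < circleHaar E) :
    circleHaar (⋂ k : ℕ, ⋃ j : ℕ, ⋃ (_ : k ≤ j), (fun z : ℂ => z ^ n j) '' E) = 1 := by
  rw [← measure_univ (μ := circleHaar)]
  refine measure_congr (ae_eq_univ.2 ?_)
  simp only [compl_iInter, compl_iUnion]
  refine measure_iUnion_null fun k => ?_
  by_contra hS
  obtain ⟨j, ⟨z, hz, hzS⟩, hkj⟩ := ((hmono.tendsto_atTop.eventually
    (eventually_exists_pow_mem hE hpos'.ne' hS)).and (eventually_ge_atTop k)).exists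
  exact mem_iInter₂.1 hzS j hkj (mem_image_of_mem _ hz)

/-- If `E ⊆ 𝕋` is measurable with `|E| > 0` and `(n_j)` is a strictly
increasing sequence of positive integers, then the set
`limsup_j F_{n_j}(E) = ⋂_k ⋃_{j ≥ k} {z^{n_j} : z ∈ E}` has full outer measure `1`. -/
theorem limsup_power_images_full_measure
    (n : ℕ → ℕ) (hmono : StrictMono n) (hpos : ∀ j, 0 < n j)
    (E : Set ℂ) (hE : MeasurableSet E) (hE𝕋 : E ⊆ Metric.sphere (0 : ℂ) 1)
    (hpos' : 0 < circleHaar E) :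
    circleHaar (⋂ k : ℕ, ⋃ j : ℕ, ⋃ (_ : k ≤ j), (fun z : ℂ => z ^ n j) '' E) = 1 :=
  limsup_power_images_full_measure_general n hmono E hE hpos'
end

section
/- Let ν > 0. There exists a sequence of coefficients (b_j)_{j≥0} in ℂ with Σ_{j≥0} |b_j|² (j+1)^{−2ν} < ∞ (so that f(z) = Σ_{j≥0} b_j z^j defines a function in the weighted Dirichlet space S_{−ν}) such that for every θ ∈ ℝ, limsup_{r→1⁻} |f(r e^{iθ})| = ∞; in particular, for every θ the radial limit lim_{r→1⁻} f(r e^{iθ}) does not exist. Explicitly: for every M > 0 and every δ > 0 there exists r with 1 − δ < r < 1 and |Σ_{j≥0} b_j (r e^{iθ})^j| > M. -/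
/-!
Take the lacunary series `f(z) = ∑ₖ 8ᵏ z^{nₖ}` with `n_{k+1} ≥ 8 (k+1) nₖ` and `nₖ^{2ν} ≥ 128ᵏ`.
The second condition makes `∑ₖ 64ᵏ (nₖ+1)^{-2ν} ≤ ∑ₖ 2⁻ᵏ` finite. On the circle of radius
`rₖ = 1 - 1/(2nₖ)` the `k`-th term has modulus at least `8ᵏ/2` (Bernoulli), the earlier terms
add up to at most `8ᵏ/7`, and the gap condition makes the `m`-th term at most `2⁻ᵐ` for `m > k`,
since `rₖ^{2nₖ} ≤ e⁻¹`. Hence `|f(rₖ e^{iθ})| ≥ 8ᵏ/3 - 2` for every `θ`, and `rₖ → 1⁻`.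
-/

open Filter Topology Finset Function

theorem le_norm_tsum_of_dominant_term {E : Type*} [NormedAddCommGroup E] [CompleteSpace E]
    {g : ℕ → E} (k : ℕ) {u : ℕ → ℝ} {a : ℝ} (hu : HasSum u a)
    (htail : ∀ i, ‖g (i + (k + 1))‖ ≤ u i) :
    ‖g k‖ - ∑ m ∈ range k, ‖g m‖ - a ≤ ‖∑' m, g m‖ := by
  have hg : Summable g :=
    (summable_nat_add_iff (k + 1)).1 (hu.summable.of_norm_bounded htail)
  have hsplit : ∑' m, g m = (∑ m ∈ range k, g m + g k) + ∑' i, g (i + (k + 1)) := by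
    rw [← sum_range_succ, hg.sum_add_tsum_nat_add]
  have hhead : ‖∑ m ∈ range k, g m‖ ≤ ∑ m ∈ range k, ‖g m‖ := norm_sum_le _ _
  have htail' : ‖∑' i, g (i + (k + 1))‖ ≤ a := tsum_of_norm_bounded hu htail
  have : ‖g k‖ ≤ ‖∑' m, g m‖ + ‖∑ m ∈ range k, g m‖ + ‖∑' i, g (i + (k + 1))‖ := by
    calc ‖g k‖ = ‖∑' m, g m - ∑ m ∈ range k, g m - ∑' i, g (i + (k + 1))‖ := by
          congr 1; rw [hsplit]; abel
      _ ≤ _ := (norm_sub_le _ _).trans (by gcongr; exact norm_sub_le _ _)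
  linarith

theorem Function.Injective.apply_extend_zero {α β γ δ : Type*} [Zero γ] [Zero δ] {n : α → β}
    (hn : Injective n) (c : α → γ) {F : β → γ → δ} (hF : ∀ j, F j 0 = 0) :
    (fun j => F j (extend n c 0 j)) = extend n (fun k => F (n k) (c k)) 0 := by
  funext j
  by_cases hj : ∃ k, n k = j
  · obtain ⟨k, rfl⟩ := hj
    simp only [hn.extend_apply]
  · simp only [extend_apply' _ _ _ hj, Pi.zero_apply, hF]

theorem half_le_one_sub_inv_two_mul_pow {N : ℕ} (hN : 0 < N) :
    1 / 2 ≤ (1 - 1 / (2 * N : ℝ)) ^ N := by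
  have hN' : (1 : ℝ) ≤ N := by exact_mod_cast hN
  have hsmall : 1 / (2 * N : ℝ) ≤ 1 := by rw [div_le_one (by positivity)]; linarith
  have hbern := one_add_mul_le_pow (a := -(1 / (2 * N : ℝ))) (by linarith) N
  have hmul : 1 + (N : ℝ) * -(1 / (2 * N)) = 1 / 2 := by field_simp; ring
  rwa [hmul, ← sub_eq_add_neg] at hbern

theorem one_sub_inv_two_mul_pow_two_mul_le {N : ℕ} (hN : 0 < N) :
    (1 - 1 / (2 * N : ℝ)) ^ (2 * N) ≤ 1 / 2 := by
  have h := Real.one_sub_div_pow_le_exp_neg (n := 2 * N) (t := 1) (by norm_cast; omega)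
  push_cast at h
  exact h.trans Real.exp_neg_one_lt_half.le

structure IsLacunary (n : ℕ → ℕ) : Prop where
  pos_zero : 0 < n 0
  gap : ∀ k, 8 * (k + 1) * n k ≤ n (k + 1)

noncomputable def lacunaryCoeff (n : ℕ → ℕ) : ℕ → ℂ :=
  extend n (fun k => (8 : ℂ) ^ k) 0

namespace IsLacunary

variable {n : ℕ → ℕ}

theorem pos (hn : IsLacunary n) (k : ℕ) : 0 < n k := by
  induction k with
  | zero => exact hn.pos_zero
  | succ k ih => exact lt_of_lt_of_le (by positivity) (hn.gap k)

theorem strictMono (hn : IsLacunary n) : StrictMono n :=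
  strictMono_nat_of_lt_succ fun k => by
    have := hn.pos k; have := hn.gap k; nlinarith

theorem mul_le_of_lt (hn : IsLacunary n) {k m : ℕ} (hkm : k < m) : 8 * m * n k ≤ n m := by
  obtain ⟨l, rfl⟩ : ∃ l, m = l + 1 := ⟨m - 1, by omega⟩
  calc 8 * (l + 1) * n k ≤ 8 * (l + 1) * n l :=
        Nat.mul_le_mul_left _ (hn.strictMono.monotone (by omega))
    _ ≤ n (l + 1) := hn.gap l

theorem one_sub_inv_two_mul_nonneg (hn : IsLacunary n) (k : ℕ) :
    0 ≤ 1 - 1 / (2 * n k : ℝ) := by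
  have : (1 : ℝ) ≤ n k := by exact_mod_cast hn.pos k
  rw [sub_nonneg, div_le_one (by positivity)]; linarith

theorem eight_pow_mul_pow_le (hn : IsLacunary n) {k m : ℕ} (hkm : k < m) :
    (8 : ℝ) ^ m * (1 - 1 / (2 * n k : ℝ)) ^ n m ≤ (1 / 2) ^ m := by
  set r : ℝ := 1 - 1 / (2 * n k : ℝ)
  have hr₀ : 0 ≤ r := hn.one_sub_inv_two_mul_nonneg k
  have hr₁ : r ≤ 1 := sub_le_self _ (by positivity)
  have hexp : 2 * n k * (4 * m) ≤ n m := by linarith [hn.mul_le_of_lt hkm]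
  calc (8 : ℝ) ^ m * r ^ n m ≤ 8 ^ m * (r ^ (2 * n k)) ^ (4 * m) := by
        rw [← pow_mul]; exact mul_le_mul_of_nonneg_left
          (pow_le_pow_of_le_one hr₀ hr₁ hexp) (by positivity)
    _ ≤ 8 ^ m * (1 / 2) ^ (4 * m) := by
        gcongr; exact one_sub_inv_two_mul_pow_two_mul_le (hn.pos k)
    _ = (1 / 2) ^ m := by rw [pow_mul, ← mul_pow]; norm_num

theorem le_norm_tsum (hn : IsLacunary n) (k : ℕ) {w : ℂ} (hw : ‖w‖ = 1 - 1 / (2 * n k : ℝ)) :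
    (8 : ℝ) ^ k / 3 - 2 ≤ ‖∑' m, (8 : ℂ) ^ m * w ^ n m‖ := by
  set r : ℝ := 1 - 1 / (2 * n k : ℝ)
  have hnorm (m : ℕ) : ‖(8 : ℂ) ^ m * w ^ n m‖ = 8 ^ m * r ^ n m := by
    simp only [norm_mul, norm_pow, hw, Complex.norm_ofNat]
  have hr₀ : 0 ≤ r := hn.one_sub_inv_two_mul_nonneg k
  have hr₁ : r ≤ 1 := sub_le_self _ (by positivity)
  have hpeak : (8 : ℝ) ^ k / 2 ≤ ‖(8 : ℂ) ^ k * w ^ n k‖ := by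
    rw [hnorm, div_eq_mul_one_div]
    exact mul_le_mul_of_nonneg_left (half_le_one_sub_inv_two_mul_pow (hn.pos k)) (by positivity)
  have hhead : ∑ m ∈ range k, ‖(8 : ℂ) ^ m * w ^ n m‖ ≤ (8 : ℝ) ^ k / 7 := by
    calc ∑ m ∈ range k, ‖(8 : ℂ) ^ m * w ^ n m‖ ≤ ∑ m ∈ range k, (8 : ℝ) ^ m :=
          sum_le_sum fun m _ => by
            rw [hnorm]; exact mul_le_of_le_one_right (by positivity) (pow_le_one₀ hr₀ hr₁)
      _ ≤ (8 : ℝ) ^ k / 7 := by rw [geom_sum_eq (by norm_num)]; linarith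
  have htail (i : ℕ) : ‖(8 : ℂ) ^ (i + (k + 1)) * w ^ n (i + (k + 1))‖ ≤ (1 / 2) ^ i := by
    rw [hnorm]
    exact (hn.eight_pow_mul_pow_le (by omega)).trans
      (pow_le_pow_of_le_one (by norm_num) (by norm_num) (by omega))
  have := le_norm_tsum_of_dominant_term (g := fun m => (8 : ℂ) ^ m * w ^ n m) k
    hasSum_geometric_two htail
  linarith [pow_nonneg (by norm_num : (0 : ℝ) ≤ 8) k]

theorem tsum_lacunaryCoeff_mul_pow {n : ℕ → ℕ} (hn : IsLacunary n) (w : ℂ) :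
    ∑' j, lacunaryCoeff n j * w ^ j = ∑' k, (8 : ℂ) ^ k * w ^ n k := by
  rw [lacunaryCoeff, hn.strictMono.injective.apply_extend_zero _ (F := fun j x => x * w ^ j)
    (fun _ => zero_mul _), tsum_extend_zero hn.strictMono.injective]

theorem tendsto_one_sub_inv_two_mul (hn : IsLacunary n) :
    Tendsto (fun k => 1 - 1 / (2 * n k : ℝ)) atTop (𝓝[<] 1) := by
  apply tendsto_nhdsWithin_of_tendsto_nhds_of_eventually_within
  · have hinv : Tendsto (fun k => 1 / (2 * n k : ℝ)) atTop (𝓝 0) := by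
      simp only [one_div]
      exact ((tendsto_natCast_atTop_atTop.comp hn.strictMono.tendsto_atTop).const_mul_atTop
        two_pos).inv_tendsto_atTop
    simpa using tendsto_const_nhds.sub hinv
  · exact Eventually.of_forall fun k =>
      Set.mem_Iio.2 (sub_lt_self _ (by have := hn.pos k; positivity))

theorem tendsto_norm_tsum_atTop (hn : IsLacunary n) (θ : ℝ) :
    Tendsto (fun k => ‖∑' j, lacunaryCoeff n j *
      (((1 - 1 / (2 * n k) : ℝ) : ℂ) * Complex.exp (θ * Complex.I)) ^ j‖) atTop atTop := by
  have h8 : Tendsto (fun k => (8 : ℝ) ^ k / 3 - 2) atTop atTop :=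
    tendsto_atTop_add_const_right _ _
      ((tendsto_pow_atTop_atTop_of_one_lt (by norm_num)).atTop_div_const (by norm_num))
  refine tendsto_atTop_mono (fun k => ?_) h8
  rw [hn.tsum_lacunaryCoeff_mul_pow]
  refine hn.le_norm_tsum k ?_
  rw [norm_mul, Complex.norm_exp_ofReal_mul_I, mul_one, Complex.norm_real,
    Real.norm_of_nonneg (hn.one_sub_inv_two_mul_nonneg k)]

end IsLacunary

theorem summable_norm_lacunaryCoeff_sq_mul_rpow {n : ℕ → ℕ} (hn : Injective n) {ν : ℝ}
    (hν : 0 ≤ ν) (hgrowth : ∀ k, (128 : ℝ) ^ k ≤ (n k : ℝ) ^ (2 * ν)) :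
    Summable (fun j : ℕ => ‖lacunaryCoeff n j‖ ^ 2 * ((j : ℝ) + 1) ^ (-(2 * ν))) := by
  rw [lacunaryCoeff,
    hn.apply_extend_zero _ (F := fun j x => ‖x‖ ^ 2 * ((j : ℝ) + 1) ^ (-(2 * ν)))
      (fun _ => by simp), summable_extend_zero hn]
  refine Summable.of_nonneg_of_le (fun k => by positivity) (fun k => ?_)
    (summable_geometric_of_lt_one (by norm_num) (by norm_num : (1 / 2 : ℝ) < 1))
  have hweight : ((n k : ℝ) + 1) ^ (-(2 * ν)) ≤ ((128 : ℝ) ^ k)⁻¹ := by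
    rw [Real.rpow_neg (by positivity)]
    exact inv_anti₀ (by positivity) ((hgrowth k).trans
      (Real.rpow_le_rpow (by positivity) (by linarith) (by positivity)))
  calc ‖(8 : ℂ) ^ k‖ ^ 2 * ((n k : ℝ) + 1) ^ (-(2 * ν)) ≤ (64 : ℝ) ^ k * ((128 : ℝ) ^ k)⁻¹ := by
        have h64 : ‖(8 : ℂ) ^ k‖ ^ 2 = (64 : ℝ) ^ k := by
          rw [norm_pow, Complex.norm_ofNat, ← pow_mul, mul_comm k, pow_mul]; norm_num
        rw [h64]; exact mul_le_mul_of_nonneg_left hweight (by positivity)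
    _ = (1 / 2) ^ k := by rw [← div_eq_mul_inv, ← div_pow]; norm_num

noncomputable def gapSeq (ν : ℝ) : ℕ → ℕ
  | 0 => 1
  | k + 1 => 8 * (k + 1) * gapSeq ν k + ⌈(128 : ℝ) ^ (((k + 1 : ℕ) : ℝ) / (2 * ν))⌉₊

theorem isLacunary_gapSeq (ν : ℝ) : IsLacunary (gapSeq ν) :=
  ⟨one_pos, fun _ => Nat.le_add_right _ _⟩

theorem rpow_le_gapSeq {ν : ℝ} (k : ℕ) : (128 : ℝ) ^ ((k : ℝ) / (2 * ν)) ≤ gapSeq ν k := by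
  cases k with
  | zero => simp [gapSeq]
  | succ k =>
    have hceil : ⌈(128 : ℝ) ^ (((k + 1 : ℕ) : ℝ) / (2 * ν))⌉₊ ≤ gapSeq ν (k + 1) :=
      Nat.le_add_left _ _
    exact (Nat.le_ceil _).trans (by exact_mod_cast hceil)

theorem pow_le_gapSeq_rpow {ν : ℝ} (hν : 0 < ν) (k : ℕ) :
    (128 : ℝ) ^ k ≤ (gapSeq ν k : ℝ) ^ (2 * ν) :=
  calc (128 : ℝ) ^ k = ((128 : ℝ) ^ ((k : ℝ) / (2 * ν))) ^ (2 * ν) := by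
        rw [← Real.rpow_mul (by norm_num), div_mul_cancel₀ _ (by positivity), Real.rpow_natCast]
    _ ≤ (gapSeq ν k : ℝ) ^ (2 * ν) :=
        Real.rpow_le_rpow (by positivity) (rpow_le_gapSeq k) (by positivity)

/-- For every `ν > 0` there is a function
`f(z) = Σ_j b_j z^j` in the weighted Dirichlet space `S_{-ν}`
(i.e. `Σ_j |b_j|² (j+1)^{-2ν} < ∞`) such that for every `θ ∈ ℝ`,
`limsup_{r→1⁻} |f(re^{iθ})| = ∞`; in particular no radial limit exists at any
boundary point. -/
theorem exists_dirichlet_function_without_radial_limits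
    (ν : ℝ) (hν : 0 < ν) :
    ∃ b : ℕ → ℂ,
      Summable (fun j : ℕ => ‖b j‖ ^ 2 * ((j : ℝ) + 1) ^ (-(2 * ν))) ∧
      ∀ θ : ℝ,
        (∀ M > (0 : ℝ), ∃ᶠ (r : ℝ) in nhdsWithin (1 : ℝ) (Set.Iio (1 : ℝ)),
          M < ‖∑' j : ℕ, b j * ((r : ℂ) * Complex.exp (θ * Complex.I)) ^ j‖) ∧
        ¬ ∃ L : ℂ, Tendsto
            (fun r : ℝ => ∑' j : ℕ, b j * ((r : ℂ) * Complex.exp (θ * Complex.I)) ^ j)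
            (nhdsWithin (1 : ℝ) (Set.Iio (1 : ℝ))) (𝓝 L) := by
  have hn := isLacunary_gapSeq ν
  refine ⟨lacunaryCoeff (gapSeq ν), summable_norm_lacunaryCoeff_sq_mul_rpow
    hn.strictMono.injective hν.le (pow_le_gapSeq_rpow hν), fun θ => ?_⟩
  have hradii := hn.tendsto_one_sub_inv_two_mul
  have hblowup := hn.tendsto_norm_tsum_atTop θ
  refine ⟨fun M _ => hradii.frequently (hblowup.eventually_gt_atTop M).frequently, ?_⟩
  rintro ⟨L, hL⟩
  exact not_tendsto_nhds_of_tendsto_atTop hblowup _ (hL.norm.comp hradii)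
end

section
/- Let a ∈ ℂ with Re(a) > 0, let ν < 0, let k ≥ 1 be an integer with (1 − 2k)/2 < ν, and let C > 0. Let g : ℂ → ℂ be any function satisfying |g(z)| ≤ C (1 − |z|²)^{−(1+2k−2ν)/2} for all z with |z| < 1. Then, writing w_n = na/(na+2) (which lies in the open unit disk for every positive integer n) and t_n = 4/|na+2|², one has |g(w_n)| · t_n^k → 0 as n → ∞. -/
open Filter Topology

/-! Writing `w_n = na/(na+2)` and `t_n = 4/|na+2|²`, one has
`1 - |w_n|² = 4(n Re a + 1)/|na+2|²`, so `n (1 - |w_n|²)` and `n² t_n` converge to positive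
limits. The growth bound then gives `|g(w_n)| t_n^k = O(n^α n^(-2k))` with `α = (1+2k-2ν)/2`,
and `α < 2k` is exactly `(1-2k)/2 < ν`. -/

namespace Complex

theorem re_natCast_mul (n : ℕ) (z : ℂ) : ((n : ℂ) * z).re = n * z.re := by
  simp

theorem sq_norm_add_two (z : ℂ) : ‖z + 2‖ ^ 2 = ‖z‖ ^ 2 + 4 * (z.re + 1) := by
  simp only [Complex.sq_norm, normSq_apply, add_re, add_im, re_ofNat, im_ofNat]
  ring

theorem add_two_ne_zero {z : ℂ} (hz : -1 < z.re) : z + 2 ≠ 0 := fun h => by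
  have := congrArg re h
  simp only [add_re, re_ofNat, zero_re] at this
  linarith

theorem norm_div_add_two_lt_one {z : ℂ} (hz : -1 < z.re) : ‖z / (z + 2)‖ < 1 := by
  rw [norm_div, div_lt_one (norm_pos_iff.mpr (add_two_ne_zero hz))]
  refine (pow_lt_pow_iff_left₀ (norm_nonneg _) (norm_nonneg _) two_ne_zero).mp ?_
  rw [sq_norm_add_two]
  linarith

theorem one_sub_sq_norm_div_add_two {z : ℂ} (hz : z + 2 ≠ 0) :
    1 - ‖z / (z + 2)‖ ^ 2 = 4 * (z.re + 1) / ‖z + 2‖ ^ 2 := by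
  rw [norm_div, div_pow, one_sub_div (by positivity), sq_norm_add_two]
  ring

end Complex

theorem rpow_neg_mul_pow_eq {x u t α : ℝ} (hx : 0 < x) (hu : 0 ≤ u) (k : ℕ) :
    u ^ (-α) * t ^ k = (x * u) ^ (-α) * (x ^ 2 * t) ^ k * x ^ (α - 2 * k) := by
  have hx1 : x ^ (-α) * x ^ (2 * k) * x ^ (α - 2 * k) = 1 := by
    rw [← Real.rpow_natCast, ← Real.rpow_add hx, ← Real.rpow_add hx]
    push_cast
    ring_nf
    exact Real.rpow_zero x
  rw [Real.mul_rpow hx.le hu, mul_pow, ← pow_mul]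
  linear_combination (-(u ^ (-α) * t ^ k)) * hx1

theorem tendsto_rpow_neg_mul_pow_nhds_zero {u t : ℕ → ℝ} {L M α : ℝ} {k : ℕ} (hL : 0 < L)
    (hu : Tendsto (fun n : ℕ => n * u n) atTop (𝓝 L))
    (ht : Tendsto (fun n : ℕ => (n : ℝ) ^ 2 * t n) atTop (𝓝 M)) (hαk : α < 2 * k) :
    Tendsto (fun n => u n ^ (-α) * t n ^ k) atTop (𝓝 0) := by
  have hpow : Tendsto (fun n : ℕ => (n : ℝ) ^ (α - 2 * k)) atTop (𝓝 0) := by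
    have h := tendsto_rpow_neg_atTop (y := 2 * k - α) (by linarith)
    rw [neg_sub] at h
    exact h.comp tendsto_natCast_atTop_atTop
  have hlim := ((hu.rpow_const (p := -α) (Or.inl hL.ne')).mul (ht.pow k)).mul hpow
  rw [mul_zero] at hlim
  refine hlim.congr' ?_
  filter_upwards [eventually_gt_atTop 0, hu.eventually (eventually_gt_nhds hL)] with n hn hnu
  have hn' : (0 : ℝ) < n := Nat.cast_pos.mpr hn
  exact (rpow_neg_mul_pow_eq hn' (pos_of_mul_pos_right hnu hn'.le).le k).symm

theorem tendsto_sq_norm_natCast_mul_add_two_div_sq (a : ℂ) :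
    Tendsto (fun n : ℕ => ‖(n : ℂ) * a + 2‖ ^ 2 / (n : ℝ) ^ 2) atTop (𝓝 (‖a‖ ^ 2)) := by
  have h : Tendsto (fun n : ℕ => ‖a + 2 * (n : ℂ)⁻¹‖ ^ 2) atTop (𝓝 (‖a‖ ^ 2)) := by
    simpa using ((tendsto_const_nhds.add
      ((tendsto_inv_atTop_nhds_zero_nat (𝕜 := ℂ)).const_mul 2)).norm).pow 2
  refine h.congr' ?_
  filter_upwards [eventually_ne_atTop 0] with n hn
  have hn' : (n : ℂ) ≠ 0 := Nat.cast_ne_zero.mpr hn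
  rw [← Complex.norm_natCast, ← div_pow, ← norm_div]
  congr 2
  field_simp

section Parabolic

variable {a : ℂ}

theorem neg_one_lt_re_natCast_mul (ha : 0 < a.re) (n : ℕ) : -1 < ((n : ℂ) * a).re := by
  rw [Complex.re_natCast_mul]
  linarith [mul_nonneg n.cast_nonneg ha.le]

theorem sq_norm_pos_of_re_pos (ha : 0 < a.re) : 0 < ‖a‖ ^ 2 := by
  have : a ≠ 0 := fun h => by simp [h] at ha
  positivity

theorem tendsto_natCast_mul_one_sub_sq_norm_div_add_two (ha : 0 < a.re) :
    Tendsto (fun n : ℕ => n * (1 - ‖(n : ℂ) * a / ((n : ℂ) * a + 2)‖ ^ 2)) atTop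
      (𝓝 (4 * a.re / ‖a‖ ^ 2)) := by
  have h := (((tendsto_const_nhds (x := a.re)).add tendsto_inv_atTop_nhds_zero_nat).const_mul
    4).div (tendsto_sq_norm_natCast_mul_add_two_div_sq a) (sq_norm_pos_of_re_pos ha).ne'
  rw [add_zero] at h
  refine h.congr' ?_
  filter_upwards [eventually_ne_atTop 0] with n hn
  have hz := Complex.add_two_ne_zero (neg_one_lt_re_natCast_mul ha n)
  rw [Pi.div_apply, Complex.one_sub_sq_norm_div_add_two hz, Complex.re_natCast_mul]
  field_simp

theorem tendsto_sq_mul_four_div_sq_norm_add_two (ha : 0 < a.re) :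
    Tendsto (fun n : ℕ => (n : ℝ) ^ 2 * (4 / ‖(n : ℂ) * a + 2‖ ^ 2)) atTop (𝓝 (4 / ‖a‖ ^ 2)) := by
  refine ((tendsto_const_nhds (x := (4 : ℝ))).div (tendsto_sq_norm_natCast_mul_add_two_div_sq a)
    (sq_norm_pos_of_re_pos ha).ne').congr' ?_
  filter_upwards [eventually_ne_atTop 0] with n hn
  have hz := Complex.add_two_ne_zero (neg_one_lt_re_natCast_mul ha n)
  rw [Pi.div_apply]
  field_simp

end Parabolic

theorem parabolic_key_estimate_general
    (a : ℂ) (ha : 0 < a.re) (ν : ℝ)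
    (k : ℕ) (hνk : (1 - 2 * (k : ℝ)) / 2 < ν)
    (C : ℝ) (g : ℂ → ℂ)
    (hg : ∀ z : ℂ, ‖z‖ < 1 →
      ‖g z‖ ≤ C * (1 - ‖z‖ ^ 2) ^ (-((1 + 2 * (k : ℝ) - 2 * ν) / 2))) :
    (∀ n : ℕ, 1 ≤ n → ‖(n : ℂ) * a / ((n : ℂ) * a + 2)‖ < 1) ∧
    Tendsto
      (fun n : ℕ =>
        ‖g ((n : ℂ) * a / ((n : ℂ) * a + 2))‖ * (4 / ‖(n : ℂ) * a + 2‖ ^ 2) ^ k)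
      atTop (𝓝 0) := by
  have hw (n : ℕ) : ‖(n : ℂ) * a / ((n : ℂ) * a + 2)‖ < 1 :=
    Complex.norm_div_add_two_lt_one (neg_one_lt_re_natCast_mul ha n)
  refine ⟨fun n _ => hw n, ?_⟩
  have hbound := tendsto_rpow_neg_mul_pow_nhds_zero (α := (1 + 2 * (k : ℝ) - 2 * ν) / 2) (k := k)
    (div_pos (by linarith) (sq_norm_pos_of_re_pos ha))
    (tendsto_natCast_mul_one_sub_sq_norm_div_add_two ha)
    (tendsto_sq_mul_four_div_sq_norm_add_two ha) (by linarith)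
  refine squeeze_zero (fun n => by positivity)
    (fun n => mul_le_mul_of_nonneg_right (hg _ (hw n)) (by positivity)) ?_
  simpa [mul_assoc] using hbound.const_mul C

/-- The key estimate for parabolic non-automorphisms: if `Re a > 0`,
`(1-2k)/2 < ν < 0`, `k ≥ 1`, and `g` satisfies the growth bound
`|g(z)| ≤ C (1-|z|²)^{-(1+2k-2ν)/2}` on the open unit disk, then with
`w_n = na/(na+2)` (which lies in the open unit disk for each `n ≥ 1`) and
`t_n = 4/|na+2|²` one has `|g(w_n)| t_n^k → 0` as `n → ∞`. -/
theorem parabolic_key_estimate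
    (a : ℂ) (ha : 0 < a.re) (ν : ℝ) (hν : ν < 0)
    (k : ℕ) (hk : 1 ≤ k) (hνk : (1 - 2 * (k : ℝ)) / 2 < ν)
    (C : ℝ) (hC : 0 < C) (g : ℂ → ℂ)
    (hg : ∀ z : ℂ, ‖z‖ < 1 →
      ‖g z‖ ≤ C * (1 - ‖z‖ ^ 2) ^ (-((1 + 2 * (k : ℝ) - 2 * ν) / 2))) :
    (∀ n : ℕ, 1 ≤ n → ‖(n : ℂ) * a / ((n : ℂ) * a + 2)‖ < 1) ∧
    Tendsto
      (fun n : ℕ =>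
        ‖g ((n : ℂ) * a / ((n : ℂ) * a + 2))‖ * (4 / ‖(n : ℂ) * a + 2‖ ^ 2) ^ k)
      atTop (𝓝 0) :=
  parabolic_key_estimate_general a ha ν k hνk C g hg
end
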